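/- arXiv:math/0701859 — 6 statements merged into one kernel-verified Lean document; each statement's English description precedes it below -/
import Mathlib

section
/- The measures β_t = e^{-t} Σ_{k∈ℤ} f_k(t/2) δ_k on ℤ (where f_k is the modified Bessel function of the first kind) form a convolution semigroup: β_s * β_t = β_{s+t} for all s, t > 0. -/
/-!
`β_t` is the Skellam distribution with parameter `t / 2`: the law of `N - N'` for independent
Poisson(`t / 2`) variables `N, N'`. Indeed, summing the product of the two Poisson weights over
the fibre `{(a, b) | a - b = k} = {(p + k⁺, p + k⁻)}` gives exactly `e^{-t} f_k(t / 2)`. Since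
`μ ↦ μ ∗ (-μ)` commutes with convolution, the semigroup property of the Poisson laws transfers
to the Skellam laws.
-/

/-- The modified Bessel function of the first kind at integer order `k`,
`f_k(t) = Σ_{p≥0} t^{|k|+2p} / ((|k|+p)! p!)`. -/
noncomputable def besselI (k : ℤ) (t : ℝ) : ℝ :=
  ∑' p : ℕ, t ^ (k.natAbs + 2 * p) / ((k.natAbs + p).factorial * p.factorial)

open MeasureTheory

/-- The measure `β_t = e^{-t} Σ_{k∈ℤ} f_k(t/2) δ_k` on `ℤ`. -/
noncomputable def betaMeasure (t : ℝ) : Measure ℤ :=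
  Measure.sum fun k : ℤ =>
    (ENNReal.ofReal (Real.exp (-t) * besselI k (t / 2))) • Measure.dirac k

open Real
open scoped NNReal ENNReal Nat

namespace MeasureTheory.Measure

theorem conv_conv_conv_comm {M : Type*} [AddCommMonoid M] [MeasurableSpace M] [MeasurableAdd₂ M]
    (μ μ' ν ν' : Measure M) [SFinite μ] [SFinite μ'] [SFinite ν] [SFinite ν'] :
    (μ ∗ μ') ∗ (ν ∗ ν') = (μ ∗ ν) ∗ (μ' ∗ ν') := by
  rw [conv_assoc, ← conv_assoc μ', conv_comm μ' ν, conv_assoc, ← conv_assoc]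

section Neg

variable {G : Type*} [AddCommGroup G] [MeasurableSpace G] [MeasurableAdd₂ G] [MeasurableNeg G]

theorem neg_conv (μ ν : Measure G) [SFinite μ] [SFinite ν] : (μ ∗ ν).neg = μ.neg ∗ ν.neg :=
  map_conv_addMonoidHom (negAddMonoidHom : G →+ G) measurable_neg

theorem conv_neg_conv_conv_neg (μ ν : Measure G) [SFinite μ] [SFinite ν] :
    (μ ∗ μ.neg) ∗ (ν ∗ ν.neg) = (μ ∗ ν) ∗ (μ ∗ ν).neg := by
  rw [conv_conv_conv_comm, neg_conv]

end Neg

theorem map_conv_map {α β M : Type*} [MeasurableSpace α] [MeasurableSpace β] [AddMonoid M]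
    [MeasurableSpace M] [MeasurableAdd₂ M] {μ : Measure α} {ν : Measure β} [SigmaFinite μ]
    [SigmaFinite ν] {f : α → M} {g : β → M} (hf : Measurable f) (hg : Measurable g) :
    μ.map f ∗ ν.map g = (μ.prod ν).map fun p ↦ f p.1 + g p.2 := by
  rw [conv, map_prod_map μ ν hf hg, map_map (by fun_prop) (hf.prodMap hg)]
  rfl

theorem map_sub_apply_singleton {μ ν : Measure ℕ} [SigmaFinite μ] [SigmaFinite ν] (k : ℤ) :
    (μ.prod ν).map (fun p ↦ (p.1 : ℤ) - p.2) {k} =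
      ∑' p : ℕ, μ {p + k.toNat} * ν {p + (-k).toNat} := by
  rw [map_apply .of_discrete (measurableSet_singleton k),
    ← tsum_indicator_apply_singleton _ _ .of_discrete]
  have hinj : Function.Injective fun p : ℕ ↦ (p + k.toNat, p + (-k).toNat) :=
    fun p q h ↦ by simpa using congrArg Prod.fst h
  rw [← hinj.tsum_eq]
  · refine tsum_congr fun p ↦ ?_
    rw [Set.indicator_of_mem (by simp), ← Set.singleton_prod_singleton, prod_prod]
  · intro x hx
    have hx : (x.1 : ℤ) - x.2 = k := by simpa using Set.support_indicator_subset hx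
    exact ⟨min x.1 x.2, by ext <;> simp <;> omega⟩

end MeasureTheory.Measure

theorem summable_besselI_terms (k : ℤ) {x : ℝ} (hx : 0 ≤ x) :
    Summable fun p : ℕ ↦ x ^ (k.natAbs + 2 * p) / ((k.natAbs + p)! * p ! : ℝ) := by
  refine .of_nonneg_of_le (fun p ↦ by positivity) (fun p ↦ ?_)
    ((summable_pow_div_factorial (x ^ 2)).mul_left (x ^ k.natAbs))
  rw [pow_add, pow_mul, mul_div_assoc]
  gcongr
  exact le_mul_of_one_le_left (by positivity) (mod_cast (k.natAbs + p).factorial_pos)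

theorem poisson_mul_poisson_eq_exp_mul_besselI_term (r : ℝ) (k : ℤ) (p : ℕ) :
    exp (-r) * r ^ (p + k.toNat) / (p + k.toNat)! *
        (exp (-r) * r ^ (p + (-k).toNat) / (p + (-k).toNat)!) =
      exp (-(2 * r)) * (r ^ (k.natAbs + 2 * p) / ((k.natAbs + p)! * p !)) := by
  have hexp : exp (-(2 * r)) = exp (-r) * exp (-r) := by rw [← exp_add]; ring_nf
  rw [hexp]
  obtain ⟨n, rfl | rfl⟩ := k.eq_nat_or_neg
  · simp only [Int.toNat_natCast, Int.natAbs_natCast, Int.toNat_neg_natCast, add_zero]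
    rw [add_comm p n]
    ring
  · simp only [Int.toNat_natCast, Int.natAbs_neg, Int.natAbs_natCast, Int.toNat_neg_natCast,
      neg_neg, add_zero]
    rw [add_comm p n]
    ring

namespace ProbabilityTheory

noncomputable def skellamMeasure (r : ℝ≥0) : Measure ℤ :=
  Po(ℤ, r) ∗ Po(ℤ, r).neg

theorem skellamMeasure_conv_skellamMeasure (r₁ r₂ : ℝ≥0) :
    skellamMeasure r₁ ∗ skellamMeasure r₂ = skellamMeasure (r₁ + r₂) := by
  rw [skellamMeasure, skellamMeasure, Measure.conv_neg_conv_conv_neg,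
    map_cast_poissonMeasure_conv, skellamMeasure]

theorem skellamMeasure_eq_map_sub (r : ℝ≥0) :
    skellamMeasure r = (Po(r).prod Po(r)).map fun p ↦ (p.1 : ℤ) - p.2 := by
  rw [skellamMeasure, Measure.neg, Measure.map_map measurable_neg .of_discrete,
    Measure.map_conv_map .of_discrete .of_discrete]
  simp [sub_eq_add_neg]

theorem skellamMeasure_singleton (r : ℝ≥0) (k : ℤ) :
    skellamMeasure r {k} = ENNReal.ofReal (exp (-(2 * r)) * besselI k r) := by
  rw [skellamMeasure_eq_map_sub, Measure.map_sub_apply_singleton, besselI, ← tsum_mul_left,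
    ENNReal.ofReal_tsum_of_nonneg (fun p ↦ by positivity)
      ((summable_besselI_terms k r.coe_nonneg).mul_left (exp (-(2 * r))))]
  refine tsum_congr fun p ↦ ?_
  rw [poissonMeasure_singleton, poissonMeasure_singleton,
    ← ENNReal.ofReal_mul (by positivity), poisson_mul_poisson_eq_exp_mul_besselI_term]

end ProbabilityTheory

theorem betaMeasure_eq_skellamMeasure {t : ℝ} (ht : 0 ≤ t) :
    betaMeasure t = ProbabilityTheory.skellamMeasure (t / 2).toNNReal := by
  refine Measure.ext_iff_singleton.2 fun k ↦ ?_
  rw [betaMeasure, Measure.sum_smul_dirac_singleton, ProbabilityTheory.skellamMeasure_singleton,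
    Real.coe_toNNReal _ (by positivity), mul_div_cancel₀ t two_ne_zero]

/-- The measures `β_t` form a convolution semigroup: `β_s ∗ β_t = β_{s+t}` for `s, t > 0`. -/
theorem betaMeasure_conv (s t : ℝ) (hs : 0 < s) (ht : 0 < t) :
    MeasureTheory.Measure.conv (betaMeasure s) (betaMeasure t) = betaMeasure (s + t) := by
  rw [betaMeasure_eq_skellamMeasure hs.le, betaMeasure_eq_skellamMeasure ht.le,
    betaMeasure_eq_skellamMeasure (add_pos hs ht).le,
    ProbabilityTheory.skellamMeasure_conv_skellamMeasure,
    ← Real.toNNReal_add (by positivity) (by positivity), add_div]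
end

section
/- The numbers F_k = |NC_h(2k)| of non-crossing partitions of {1,…,2k} into even blocks satisfy the recurrence F_{k+1} = Σ_{x_0 + x_1 + x_2 = k} F_{x_0} F_{x_1} F_{x_2}, with F_0 = 1. -/
open Finset

/-- A partition of `{1,…,m}` is non-crossing if there are no `a < b < c < d` with
`a, c` in one block and `b, d` in a different block. -/
def IsNonCrossing {m : ℕ} (P : Finpartition (Finset.univ : Finset (Fin m))) : Prop :=
  ∀ a b c d : Fin m, a < b → b < c → c < d →
    ∀ B ∈ P.parts, ∀ C ∈ P.parts, a ∈ B → c ∈ B → b ∈ C → d ∈ C → B = C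

/-- `F_k = |NC_h(2k)|`, the number of non-crossing partitions of `{1,…,2k}` all of whose
blocks have even size. -/
noncomputable def Fnum (k : ℕ) : ℕ :=
  Nat.card {P : Finpartition (Finset.univ : Finset (Fin (2 * k))) //
    IsNonCrossing P ∧ ∀ B ∈ P.parts, Even B.card}

section NCEdev


open Finset

section NCEdev

variable {α : Type*} [LinearOrder α] [DecidableEq α] {β : Type*} [LinearOrder β] [DecidableEq β]

/-- noncrossing predicate, generic -/
def NCg {s : Finset α} (P : Finpartition s) : Prop :=
  ∀ a b c d : α, a < b → b < c → c < d →
    ∀ B ∈ P.parts, ∀ C ∈ P.parts, a ∈ B → c ∈ B → b ∈ C → d ∈ C → B = C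

def NCE (s : Finset α) : Type _ :=
  {P : Finpartition s // NCg P ∧ ∀ B ∈ P.parts, Even B.card}

def pmapFP (f : α → β) {s : Finset α} (hf : Set.InjOn f s) (P : Finpartition s) :
    Finpartition (s.image f) where
  parts := P.parts.image (Finset.image f)
  supIndep := by
    rw [Finset.supIndep_iff_pairwiseDisjoint]
    rintro x hx y hy hxy
    simp only [coe_image, Set.mem_image, mem_coe] at hx hy
    obtain ⟨B, hB, rfl⟩ := hx
    obtain ⟨C, hC, rfl⟩ := hy
    have hBC : B ≠ C := fun h => hxy (by rw [h])
    have hd : Disjoint B C := P.disjoint hB hC hBC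
    simp only [Function.onFun, id_eq]
    rw [Finset.disjoint_left]
    rintro a ha ha'
    simp only [Finset.mem_image] at ha ha'
    obtain ⟨u, hu, rfl⟩ := ha
    obtain ⟨v, hv, huv⟩ := ha'
    have : v = u := hf (P.le hC hv) (P.le hB hu) huv
    subst this
    exact Finset.disjoint_left.1 hd hu hv
  sup_parts := by
    ext a
    simp only [Finset.mem_sup, Finset.mem_image, id_eq]
    constructor
    · rintro ⟨x, hx, ha⟩
      obtain ⟨B, hB, rfl⟩ := hx
      obtain ⟨u, hu, rfl⟩ := Finset.mem_image.1 ha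
      exact ⟨u, P.le hB hu, rfl⟩
    · rintro ⟨u, hu, rfl⟩
      have := P.sup_parts
      have hu' : u ∈ P.parts.sup id := by rw [this]; exact hu
      obtain ⟨B, hB, huB⟩ := Finset.mem_sup.1 hu'
      exact ⟨B.image f, ⟨B, hB, rfl⟩, Finset.mem_image_of_mem _ huB⟩
  bot_notMem := by
    simp only [Finset.bot_eq_empty, Finset.mem_image]
    rintro ⟨B, hB, hBe⟩
    rw [Finset.image_eq_empty] at hBe
    apply P.bot_notMem
    rw [Finset.bot_eq_empty, ← hBe]
    exact hB

lemma parts_pmapFP (f : α → β) {s : Finset α} (hf : Set.InjOn f s) (P : Finpartition s) :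
    (pmapFP f hf P).parts = P.parts.image (Finset.image f) := rfl

def pmapNCE (f : α → β) {s : Finset α} (hf : StrictMonoOn f s) (P : NCE s) :
    NCE (s.image f) := by
  refine ⟨pmapFP f hf.injOn P.1, ?_, ?_⟩
  · rintro a b c d hab hbc hcd B hB C hC ha hc hb hd
    rw [parts_pmapFP] at hB hC
    obtain ⟨B0, hB0, rfl⟩ := Finset.mem_image.1 hB
    obtain ⟨C0, hC0, rfl⟩ := Finset.mem_image.1 hC
    obtain ⟨a0, ha0, rfl⟩ := Finset.mem_image.1 ha
    obtain ⟨c0, hc0, rfl⟩ := Finset.mem_image.1 hc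
    obtain ⟨b0, hb0, rfl⟩ := Finset.mem_image.1 hb
    obtain ⟨d0, hd0, rfl⟩ := Finset.mem_image.1 hd
    have hsa := P.1.le hB0 ha0
    have hsc := P.1.le hB0 hc0
    have hsb := P.1.le hC0 hb0
    have hsd := P.1.le hC0 hd0
    have h1 : a0 < b0 := (hf.lt_iff_lt hsa hsb).1 hab
    have h2 : b0 < c0 := (hf.lt_iff_lt hsb hsc).1 hbc
    have h3 : c0 < d0 := (hf.lt_iff_lt hsc hsd).1 hcd
    have := P.2.1 a0 b0 c0 d0 h1 h2 h3 B0 hB0 C0 hC0 ha0 hc0 hb0 hd0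
    rw [this]
  · intro B hB
    rw [parts_pmapFP] at hB
    obtain ⟨B0, hB0, rfl⟩ := Finset.mem_image.1 hB
    rw [Finset.card_image_of_injOn (hf.injOn.mono (P.1.le hB0))]
    exact P.2.2 B0 hB0

lemma parts_pmapNCE (f : α → β) {s : Finset α} (hf : StrictMonoOn f s) (P : NCE s) :
    (pmapNCE f hf P).1.parts = P.1.parts.image (Finset.image f) := rfl

def copyNCE {s t : Finset α} (h : s = t) : NCE s ≃ NCE t where
  toFun P := ⟨P.1.copy h, P.2⟩
  invFun Q := ⟨Q.1.copy h.symm, Q.2⟩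
  left_inv P := Subtype.ext (Finpartition.ext rfl)
  right_inv Q := Subtype.ext (Finpartition.ext rfl)

lemma copyNCE_parts {s t : Finset α} (h : s = t) (P : NCE s) :
    ((copyNCE h) P).1.parts = P.1.parts := rfl

def transNCE (f : α → β) (g : β → α) (s : Finset α) (t : Finset β)
    (hf : StrictMonoOn f s) (hg : StrictMonoOn g t)
    (hst : s.image f = t) (hgf : ∀ x ∈ s, g (f x) = x) : NCE s ≃ NCE t := by
  have hfg : ∀ y ∈ t, f (g y) = y := by
    intro y hy
    rw [← hst] at hy
    obtain ⟨x, hx, rfl⟩ := Finset.mem_image.1 hy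
    rw [hgf x hx]
  have hts : t.image g = s := by
    rw [← hst, Finset.image_image]
    rw [show s.image (g ∘ f) = s.image id from Finset.image_congr (fun x hx => hgf x hx)]
    exact Finset.image_id
  refine
    { toFun := fun P => copyNCE hst (pmapNCE f hf P)
      invFun := fun Q => copyNCE hts (pmapNCE g hg Q)
      left_inv := ?_, right_inv := ?_ }
  · intro P
    apply Subtype.ext
    apply Finpartition.ext
    rw [copyNCE_parts, parts_pmapNCE, copyNCE_parts, parts_pmapNCE, Finset.image_image]
    conv_rhs => rw [← Finset.image_id (s := P.1.parts)]
    apply Finset.image_congr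
    intro B hB
    simp only [Function.comp_apply, id_eq]
    rw [Finset.image_image]
    conv_rhs => rw [← Finset.image_id (s := B)]
    exact Finset.image_congr (fun x hx => hgf x (P.1.le hB hx))
  · intro Q
    apply Subtype.ext
    apply Finpartition.ext
    rw [copyNCE_parts, parts_pmapNCE, copyNCE_parts, parts_pmapNCE, Finset.image_image]
    conv_rhs => rw [← Finset.image_id (s := Q.1.parts)]
    apply Finset.image_congr
    intro B hB
    simp only [Function.comp_apply, id_eq]
    rw [Finset.image_image]
    conv_rhs => rw [← Finset.image_id (s := B)]
    exact Finset.image_congr (fun x hx => hfg x (Q.1.le hB hx))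



section NatPart
noncomputable instance finpartitionFinite (s : Finset α) : Finite (Finpartition s) := by
  apply Finite.of_injective (β := {t // t ∈ s.powerset.powerset})
    (fun P => ⟨P.parts, by
      rw [Finset.mem_powerset]
      intro B hB
      rw [Finset.mem_powerset]
      exact P.le hB⟩)
  intro P Q h
  exact Finpartition.ext (congrArg Subtype.val h)

noncomputable instance NCEFinite (s : Finset α) : Finite (NCE s) :=
  Subtype.finite

lemma NCE_unique_empty (s : Finset α) (hs : s = ∅) : Nat.card (NCE s) = 1 := by
  subst hs
  have hne : Nonempty (NCE (∅ : Finset α)) := by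
    refine ⟨⟨(Finpartition.empty (Finset α)).copy Finset.bot_eq_empty, ?_, ?_⟩⟩
    · intro a b c d _ _ _ B hB
      simp [Finpartition.copy, Finpartition.empty] at hB
    · intro B hB
      simp [Finpartition.copy, Finpartition.empty] at hB
  have hsub : Subsingleton (NCE (∅ : Finset α)) := by
    constructor
    rintro ⟨P, _⟩ ⟨Q, _⟩
    apply Subtype.ext
    apply Finpartition.ext
    have h1 : P.parts = ∅ := Finpartition.parts_eq_empty_iff.2 Finset.bot_eq_empty.symm
    have h2 : Q.parts = ∅ := Finpartition.parts_eq_empty_iff.2 Finset.bot_eq_empty.symm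
    rw [h1, h2]
  exact Nat.card_unique

lemma image_val_univ (M : ℕ) : (Finset.univ : Finset (Fin M)).image Fin.val = Finset.range M := by
  ext x
  simp only [Finset.mem_image, Finset.mem_univ, true_and, Finset.mem_range]
  constructor
  · rintro ⟨i, rfl⟩; exact i.isLt
  · intro hx; exact ⟨⟨x, hx⟩, rfl⟩

lemma Fnum_eq_card_NCE (m : ℕ) : Fnum m = Nat.card (NCE (Finset.range (2 * m))) := by
  have h0 : Fnum m = Nat.card (NCE (Finset.univ : Finset (Fin (2 * m)))) := by
    apply Nat.card_congr
    exact Equiv.subtypeEquivRight (fun P => Iff.rfl)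
  rw [h0]
  rcases Nat.eq_zero_or_pos m with hm | hm
  · subst hm
    rw [NCE_unique_empty _ (by simp), NCE_unique_empty (α := ℕ) _ (by simp)]
  · have hM : 0 < 2 * m := by omega
    apply Nat.card_congr
    refine transNCE Fin.val (fun x => if h : x < 2 * m then ⟨x, h⟩ else ⟨0, hM⟩) _ _
      ?_ ?_ (image_val_univ _) ?_
    · intro x _ y _ hxy; exact hxy
    · intro x hx y hy hxy
      rw [Finset.mem_coe, Finset.mem_range] at hx hy
      simp only [dif_pos hx, dif_pos hy]
      exact hxy
    · intro x _
      simp [x.isLt]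

lemma card_NCE_Ico (a b x : ℕ) (h : b - a = 2 * x) :
    Nat.card (NCE (Finset.Ico a b)) = Fnum x := by
  rw [Fnum_eq_card_NCE, ← h]
  apply Nat.card_congr
  refine transNCE (fun y => y - a) (fun y => y + a) _ _ ?_ ?_ ?_ ?_
  · intro u hu v hv huv
    simp only [Finset.mem_coe, Finset.mem_Ico] at hu hv
    dsimp only
    omega
  · intro u _ v _ huv
    dsimp only
    omega
  · rw [Nat.image_sub_const_Ico (le_refl a)]
    rw [show a - a = 0 by omega, h, Finset.range_eq_Ico]
  · intro u hu
    simp only [Finset.mem_Ico] at hu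
    omega

lemma card_fiberwise_nat {X : Type*} [Finite X] {γ : Type*} [DecidableEq γ] (f : X → γ)
    (S : Finset γ) (h : ∀ x, f x ∈ S) :
    Nat.card X = ∑ v ∈ S, Nat.card {x : X // f x = v} := by
  have : Fintype X := Fintype.ofFinite X
  rw [Nat.card_eq_fintype_card, ← Finset.card_univ]
  rw [Finset.card_eq_sum_card_fiberwise (f := f) (t := S) (fun x _ => h x)]
  apply Finset.sum_congr rfl
  intro v _
  rw [Nat.card_eq_fintype_card, Fintype.card_subtype]



variable {n b c : ℕ}

variable {n b c : ℕ}

/-- the block containing 0 -/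
def Bof (P : NCE (Finset.range n)) : Finset ℕ := P.1.part 0

lemma zero_mem_B (hn : 0 < n) (P : NCE (Finset.range n)) : 0 ∈ Bof P :=
  P.1.mem_part (by simp [hn])

lemma B_mem_parts (hn : 0 < n) (P : NCE (Finset.range n)) : Bof P ∈ P.1.parts :=
  P.1.part_mem.2 (by simp [hn])

lemma two_le_cardB (hn : 0 < n) (P : NCE (Finset.range n)) : 2 ≤ (Bof P).card := by
  obtain ⟨t, ht⟩ := P.2.2 _ (B_mem_parts hn P)
  have h1 : 0 < (Bof P).card := Finset.card_pos.2 ⟨0, zero_mem_B hn P⟩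
  omega

lemma eraseB_nonempty (hn : 0 < n) (P : NCE (Finset.range n)) :
    ((Bof P).erase 0).Nonempty := by
  rw [← Finset.card_pos, Finset.card_erase_of_mem (zero_mem_B hn P)]
  have := two_le_cardB hn P
  omega

def bstat (hn : 0 < n) (P : NCE (Finset.range n)) : ℕ :=
  ((Bof P).erase 0).min' (eraseB_nonempty hn P)

def cstat (hn : 0 < n) (P : NCE (Finset.range n)) : ℕ :=
  (Bof P).max' ⟨0, zero_mem_B hn P⟩

section StatFacts
variable (hn : 0 < n) (P : NCE (Finset.range n))

lemma b_mem_B : bstat hn P ∈ Bof P :=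
  Finset.mem_of_mem_erase (Finset.min'_mem _ _)

lemma b_ne_zero : bstat hn P ≠ 0 :=
  Finset.ne_of_mem_erase (Finset.min'_mem _ _)

lemma b_min {y : ℕ} (hy : y ∈ Bof P) (hy0 : y ≠ 0) : bstat hn P ≤ y :=
  Finset.min'_le _ _ (Finset.mem_erase.2 ⟨hy0, hy⟩)

lemma c_mem_B : cstat hn P ∈ Bof P := Finset.max'_mem _ _

lemma c_max {y : ℕ} (hy : y ∈ Bof P) : y ≤ cstat hn P := Finset.le_max' _ _ hy

lemma b_le_c : bstat hn P ≤ cstat hn P := c_max hn P (b_mem_B hn P)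

lemma b_pos : 0 < bstat hn P := Nat.pos_of_ne_zero (b_ne_zero hn P)

include hn in
lemma B_subset_range : Bof P ⊆ Finset.range n := P.1.le (B_mem_parts hn P)

lemma c_lt_n : cstat hn P < n :=
  Finset.mem_range.1 (B_subset_range hn P (c_mem_B hn P))

/-- every element of the block of 0 is 0, b, or in (b, c] -/
lemma memB_cases {y : ℕ} (hy : y ∈ Bof P) :
    y = 0 ∨ y = bstat hn P ∨ (bstat hn P < y ∧ y ≤ cstat hn P) := by
  rcases eq_or_ne y 0 with h0 | h0
  · exact Or.inl h0
  rcases eq_or_ne y (bstat hn P) with hb' | hb'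
  · exact Or.inr (Or.inl hb')
  have h1 := b_min hn P hy h0
  have h2 := c_max hn P hy
  exact Or.inr (Or.inr ⟨lt_of_le_of_ne h1 (Ne.symm hb'), h2⟩)

/-- straddle lemma: every other part is contained in one of the three intervals -/
lemma straddle {C : Finset ℕ} (hC : C ∈ P.1.parts) (hne : C ≠ Bof P) :
    C ⊆ Finset.Ico 1 (bstat hn P) ∨
    C ⊆ Finset.Ico (bstat hn P + 1) (cstat hn P + 1) ∨
    C ⊆ Finset.Ico (cstat hn P + 1) n := by
  set b' := bstat hn P with hb'
  set c' := cstat hn P with hc'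
  have hCne : C.Nonempty := P.1.nonempty_of_mem_parts hC
  set m := C.min' hCne with hm
  have hmC : m ∈ C := Finset.min'_mem _ _
  have hmin : ∀ e ∈ C, m ≤ e := fun e he => Finset.min'_le _ _ he
  have hnotB : ∀ y, y ∈ C → y ∉ Bof P := by
    intro y hyC hyB
    exact hne (P.1.eq_of_mem_parts hC (B_mem_parts hn P) hyC hyB)
  have hm0 : m ≠ 0 := fun h => hnotB m hmC (h ▸ zero_mem_B hn P)
  have hrange : ∀ e ∈ C, e < n := fun e he =>
    Finset.mem_range.1 (P.1.le hC he)
  rcases lt_trichotomy m b' with hmb | hmb | hmb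
  · left
    intro e he
    rw [Finset.mem_Ico]
    refine ⟨?_, ?_⟩
    · have := hmin e he; omega
    · by_contra hbe
      push_neg at hbe
      have heb : e ≠ b' := fun h => hnotB e he (h ▸ b_mem_B hn P)
      have hbe' : b' < e := by omega
      have := P.2.1 0 m b' e (by omega) hmb hbe' (Bof P) (B_mem_parts hn P) C hC
        (zero_mem_B hn P) (b_mem_B hn P) hmC he
      exact hne this.symm
  · exact absurd (hmb ▸ b_mem_B hn P) (hnotB m hmC)
  · rcases le_or_gt m c' with hmc | hmc
    · right; left
      intro e he
      rw [Finset.mem_Ico]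
      have h1 := hmin e he
      have hmc' : m < c' := lt_of_le_of_ne hmc (fun h => hnotB m hmC (h ▸ c_mem_B hn P))
      refine ⟨by omega, ?_⟩
      by_contra hec
      push_neg at hec
      have := P.2.1 b' m c' e hmb hmc' (by omega) (Bof P) (B_mem_parts hn P) C hC
        (b_mem_B hn P) (c_mem_B hn P) hmC he
      exact hne this.symm
    · right; right
      intro e he
      rw [Finset.mem_Ico]
      have := hmin e he
      exact ⟨by omega, hrange e he⟩


/-- middle parts: parts of P inside the middle interval -/
def mparts : Finset (Finset ℕ) :=
  P.1.parts.filter (· ⊆ Finset.Ico (bstat hn P + 1) (cstat hn P + 1))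

/-- the block of 0 minus 0 and b -/
def Dof : Finset ℕ := ((Bof P).erase 0).erase (bstat hn P)

lemma memD_iff {y : ℕ} :
    y ∈ Dof hn P ↔ y ∈ Bof P ∧ y ≠ 0 ∧ y ≠ bstat hn P := by
  unfold Dof
  rw [Finset.mem_erase, Finset.mem_erase]
  tauto

lemma D_subset : Dof hn P ⊆ Finset.Ico (bstat hn P + 1) (cstat hn P + 1) := by
  intro y hy
  rw [memD_iff] at hy
  obtain ⟨hyB, hy0, hyb⟩ := hy
  rcases memB_cases hn P hyB with h | h | h
  · exact absurd h hy0
  · exact absurd h hyb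
  · rw [Finset.mem_Ico]; omega

lemma c_mem_D (hbc : bstat hn P < cstat hn P) : cstat hn P ∈ Dof hn P := by
  rw [memD_iff]
  refine ⟨c_mem_B hn P, ?_, ?_⟩ <;> [skip; omega]
  have := b_pos hn P; omega

lemma D_eq_empty (hbc : ¬ bstat hn P < cstat hn P) : Dof hn P = ∅ := by
  rw [Finset.eq_empty_iff_forall_notMem]
  intro y hy
  have h1 := D_subset hn P hy
  rw [Finset.mem_Ico] at h1
  have := b_le_c hn P
  omega

lemma cardD : (Dof hn P).card = (Bof P).card - 2 := by
  unfold Dof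
  rw [Finset.card_erase_of_mem (Finset.mem_erase.2 ⟨b_ne_zero hn P, b_mem_B hn P⟩),
    Finset.card_erase_of_mem (zero_mem_B hn P)]
  omega

lemma evenD : Even (Dof hn P).card := by
  rw [cardD hn P]
  obtain ⟨t, ht⟩ := P.2.2 _ (B_mem_parts hn P)
  have := two_le_cardB hn P
  exact ⟨t - 1, by omega⟩

lemma B_eq_insert : Bof P = insert 0 (insert (bstat hn P) (Dof hn P)) := by
  ext y
  simp only [Finset.mem_insert, memD_iff]
  constructor
  · intro hy
    rcases eq_or_ne y 0 with h | h
    · exact Or.inl h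
    rcases eq_or_ne y (bstat hn P) with h' | h'
    · exact Or.inr (Or.inl h')
    · exact Or.inr (Or.inr ⟨hy, h, h'⟩)
  · rintro (rfl | rfl | ⟨hy, _, _⟩)
    · exact zero_mem_B hn P
    · exact b_mem_B hn P
    · exact hy

/-- restriction to the interval left of b -/
def restrict0 : NCE (Finset.Ico 1 (bstat hn P)) := by
  refine ⟨Finpartition.ofSubset P.1 (Finset.filter_subset (· ⊆ Finset.Ico 1 (bstat hn P)) _) ?_,
    ?_, ?_⟩
  · ext e
    rw [Finset.mem_sup]
    constructor
    · rintro ⟨C, hC, heC⟩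
      exact (Finset.mem_filter.1 hC).2 heC
    · intro he
      have he' : e ∈ Finset.range n := by
        rw [Finset.mem_Ico] at he
        have h1 := b_le_c hn P
        have h2 := c_lt_n hn P
        rw [Finset.mem_range]
        omega
      refine ⟨P.1.part e, ?_, P.1.mem_part he'⟩
      rw [Finset.mem_filter]
      refine ⟨P.1.part_mem.2 he', ?_⟩
      have hne : P.1.part e ≠ Bof P := by
        intro h
        have heB : e ∈ Bof P := h ▸ P.1.mem_part he'
        rcases memB_cases hn P heB with h' | h' | h' <;>
          (rw [Finset.mem_Ico] at he; omega)
      rcases straddle hn P (P.1.part_mem.2 he') hne with h | h | h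
      · exact h
      · have := h (P.1.mem_part he'); rw [Finset.mem_Ico] at this he; omega
      · have := h (P.1.mem_part he')
        rw [Finset.mem_Ico] at this he
        have := b_le_c hn P
        omega
  · intro a' b' c' d' h1 h2 h3 B hB C hC ha hc hb hd
    exact P.2.1 a' b' c' d' h1 h2 h3 B (Finset.mem_filter.1 hB).1 C (Finset.mem_filter.1 hC).1
      ha hc hb hd
  · intro B hB
    exact P.2.2 B (Finset.mem_filter.1 hB).1

/-- restriction to the interval right of c -/
def restrict2 : NCE (Finset.Ico (cstat hn P + 1) n) := by
  refine ⟨Finpartition.ofSubset P.1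
    (Finset.filter_subset (· ⊆ Finset.Ico (cstat hn P + 1) n) _) ?_, ?_, ?_⟩
  · ext e
    rw [Finset.mem_sup]
    constructor
    · rintro ⟨C, hC, heC⟩
      exact (Finset.mem_filter.1 hC).2 heC
    · intro he
      have he' : e ∈ Finset.range n := by
        rw [Finset.mem_Ico] at he
        rw [Finset.mem_range]
        omega
      refine ⟨P.1.part e, ?_, P.1.mem_part he'⟩
      rw [Finset.mem_filter]
      refine ⟨P.1.part_mem.2 he', ?_⟩
      have hne : P.1.part e ≠ Bof P := by
        intro h
        have heB : e ∈ Bof P := h ▸ P.1.mem_part he'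
        have := c_max hn P heB
        rw [Finset.mem_Ico] at he; omega
      rcases straddle hn P (P.1.part_mem.2 he') hne with h | h | h
      · have := h (P.1.mem_part he'); rw [Finset.mem_Ico] at this he
        have := b_le_c hn P; omega
      · have := h (P.1.mem_part he'); rw [Finset.mem_Ico] at this he; omega
      · exact h
  · intro a' b' c' d' h1 h2 h3 B hB C hC ha hc hb hd
    exact P.2.1 a' b' c' d' h1 h2 h3 B (Finset.mem_filter.1 hB).1 C (Finset.mem_filter.1 hC).1
      ha hc hb hd
  · intro B hB
    exact P.2.2 B (Finset.mem_filter.1 hB).1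

lemma not_B_subset_mid : ¬ Bof P ⊆ Finset.Ico (bstat hn P + 1) (cstat hn P + 1) := by
  intro h
  have := h (zero_mem_B hn P)
  rw [Finset.mem_Ico] at this
  omega

lemma mem_mparts_iff {C : Finset ℕ} :
    C ∈ mparts hn P ↔ C ∈ P.1.parts ∧ C ⊆ Finset.Ico (bstat hn P + 1) (cstat hn P + 1) :=
  Finset.mem_filter

lemma D_not_mem_parts (hbc : bstat hn P < cstat hn P) : Dof hn P ∉ P.1.parts := by
  intro h
  have hc : cstat hn P ∈ Dof hn P := c_mem_D hn P hbc
  have : Dof hn P = Bof P := P.1.eq_of_mem_parts h (B_mem_parts hn P) hc (c_mem_B hn P)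
  have h0 : (0 : ℕ) ∈ Dof hn P := this ▸ zero_mem_B hn P
  rw [memD_iff] at h0
  exact h0.2.1 rfl

/-- the middle partition: parts of P inside the middle interval, together with D -/
def restrict1 : NCE (Finset.Ico (bstat hn P + 1) (cstat hn P + 1)) := by
  refine ⟨⟨if bstat hn P < cstat hn P then insert (Dof hn P) (mparts hn P) else mparts hn P,
    ?_, ?_, ?_⟩, ?_, ?_⟩
  · rw [Finset.supIndep_iff_pairwiseDisjoint]
    have key : ∀ x ∈ mparts hn P, Disjoint (Dof hn P) x := by
      intro x hx
      rw [mem_mparts_iff] at hx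
      rw [Finset.disjoint_left]
      intro e he hex
      rw [memD_iff] at he
      have : x = Bof P := P.1.eq_of_mem_parts hx.1 (B_mem_parts hn P) hex he.1
      exact not_B_subset_mid hn P (this ▸ hx.2)
    intro x hx y hy hxy
    rw [Finset.mem_coe] at hx hy
    split_ifs at hx hy with h
    · rcases Finset.mem_insert.1 hx with rfl | hx' <;>
        rcases Finset.mem_insert.1 hy with rfl | hy'
      · exact absurd rfl hxy
      · exact key y hy'
      · exact (key x hx').symm
      · exact P.1.disjoint (mem_mparts_iff hn P |>.1 hx').1 (mem_mparts_iff hn P |>.1 hy').1 hxy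
    · exact P.1.disjoint (mem_mparts_iff hn P |>.1 hx).1 (mem_mparts_iff hn P |>.1 hy).1 hxy
  · ext e
    rw [Finset.mem_sup]
    constructor
    · rintro ⟨C, hC, heC⟩
      split_ifs at hC with h
      · rcases Finset.mem_insert.1 hC with rfl | hC'
        · exact D_subset hn P heC
        · exact (mem_mparts_iff hn P |>.1 hC').2 heC
      · exact (mem_mparts_iff hn P |>.1 hC).2 heC
    · intro he
      rw [Finset.mem_Ico] at he
      have hbc : bstat hn P < cstat hn P := by omega
      rw [if_pos hbc]
      have he' : e ∈ Finset.range n := by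
        rw [Finset.mem_range]
        have := c_lt_n hn P; omega
      rcases eq_or_ne (P.1.part e) (Bof P) with hPB | hPB
      · refine ⟨Dof hn P, Finset.mem_insert_self _ _, ?_⟩
        show e ∈ Dof hn P
        rw [memD_iff]
        exact ⟨hPB ▸ P.1.mem_part he', by omega, by omega⟩
      · refine ⟨P.1.part e, ?_, P.1.mem_part he'⟩
        rw [Finset.mem_insert, mem_mparts_iff]
        refine Or.inr ⟨P.1.part_mem.2 he', ?_⟩
        rcases straddle hn P (P.1.part_mem.2 he') hPB with h | h | h
        · have := h (P.1.mem_part he'); rw [Finset.mem_Ico] at this; omega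
        · exact h
        · have := h (P.1.mem_part he'); rw [Finset.mem_Ico] at this; omega
  · intro hbot
    rw [Finset.bot_eq_empty] at hbot
    split_ifs at hbot with h
    · rcases Finset.mem_insert.1 hbot with h' | h'
      · have := c_mem_D hn P h
        rw [← h'] at this
        exact Finset.notMem_empty _ this
      · exact P.1.bot_notMem (by rw [Finset.bot_eq_empty]; exact (mem_mparts_iff hn P |>.1 h').1)
    · exact P.1.bot_notMem (by rw [Finset.bot_eq_empty]; exact (mem_mparts_iff hn P |>.1 hbot).1)
  · -- noncrossing
    intro a' b' c' d' h1 h2 h3 B hB C hC ha hc hb hd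
    simp only at hB hC
    have liftmem : ∀ E, E ∈ (if bstat hn P < cstat hn P then
        insert (Dof hn P) (mparts hn P) else mparts hn P) →
        (E = Dof hn P ∧ bstat hn P < cstat hn P) ∨ E ∈ mparts hn P := by
      intro E hE
      split_ifs at hE with h
      · rcases Finset.mem_insert.1 hE with h' | h'
        · exact Or.inl ⟨h', h⟩
        · exact Or.inr h'
      · exact Or.inr hE
    have hDB : Dof hn P ⊆ Bof P := fun y hy => (memD_iff hn P |>.1 hy).1
    rcases liftmem B hB with ⟨rfl, hbc⟩ | hB' <;> rcases liftmem C hC with ⟨rfl, hbc'⟩ | hC'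
    · rfl
    · -- B = D, C ∈ mparts : crossing of Bof and C in P, contradiction
      exfalso
      have := P.2.1 a' b' c' d' h1 h2 h3 (Bof P) (B_mem_parts hn P) C
        (mem_mparts_iff hn P |>.1 hC').1 (hDB ha) (hDB hc) hb hd
      exact not_B_subset_mid hn P (this ▸ (mem_mparts_iff hn P |>.1 hC').2)
    · exfalso
      have := P.2.1 a' b' c' d' h1 h2 h3 B (mem_mparts_iff hn P |>.1 hB').1 (Bof P)
        (B_mem_parts hn P) ha hc (hDB hb) (hDB hd)
      exact not_B_subset_mid hn P (this ▸ (mem_mparts_iff hn P |>.1 hB').2)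
    · exact P.2.1 a' b' c' d' h1 h2 h3 B (mem_mparts_iff hn P |>.1 hB').1 C
        (mem_mparts_iff hn P |>.1 hC').1 ha hc hb hd
  · -- even
    intro B hB
    simp only at hB
    split_ifs at hB with h
    · rcases Finset.mem_insert.1 hB with rfl | hB'
      · exact evenD hn P
      · exact P.2.2 B (mem_mparts_iff hn P |>.1 hB').1
    · exact P.2.2 B (mem_mparts_iff hn P |>.1 hB).1

end StatFacts

lemma part_of_not_mem {s : Finset ℕ} (P : Finpartition s) {a : ℕ} (h : a ∉ s) :
    P.part a = ∅ := dif_neg h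

section Glue
variable (Q0 : NCE (Finset.Ico 1 b)) (Q1 : NCE (Finset.Ico (b + 1) (c + 1)))
  (Q2 : NCE (Finset.Ico (c + 1) n))

/-- the candidate block D in the glued partition -/
def DG : Finset ℕ := Q1.1.part c

/-- the block of 0 in the glued partition -/
def BG : Finset ℕ := insert 0 (insert b (DG Q1))

lemma DG_cases (hb : 0 < b) :
    (¬ b < c ∧ DG Q1 = ∅) ∨ (b < c ∧ DG Q1 ∈ Q1.1.parts ∧ c ∈ DG Q1) := by
  rcases lt_or_ge b c with h | h
  · right
    have hc : c ∈ Finset.Ico (b + 1) (c + 1) := by rw [Finset.mem_Ico]; omega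
    exact ⟨h, Q1.1.part_mem.2 hc, Q1.1.mem_part hc⟩
  · left
    refine ⟨by omega, part_of_not_mem _ ?_⟩
    rw [Finset.mem_Ico]; omega

lemma DG_subset (hb : 0 < b) : DG Q1 ⊆ Finset.Ico (b + 1) (c + 1) := by
  rcases DG_cases Q1 hb with ⟨_, h⟩ | ⟨_, h, _⟩
  · rw [h]; exact Finset.empty_subset _
  · exact Q1.1.le h

lemma memBG_iff (hb : 0 < b) {y : ℕ} :
    y ∈ BG Q1 ↔ y = 0 ∨ y = b ∨ (y ∈ DG Q1 ∧ b + 1 ≤ y ∧ y ≤ c) := by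
  unfold BG
  simp only [Finset.mem_insert]
  constructor
  · rintro (h | h | h)
    · exact Or.inl h
    · exact Or.inr (Or.inl h)
    · have := Finset.mem_Ico.1 (DG_subset Q1 hb h)
      exact Or.inr (Or.inr ⟨h, by omega, by omega⟩)
  · rintro (h | h | ⟨h, _⟩)
    · exact Or.inl h
    · exact Or.inr (Or.inl h)
    · exact Or.inr (Or.inr h)

/-- the parts of the glued partition -/
def glueParts : Finset (Finset ℕ) :=
  insert (BG Q1) (Q0.1.parts ∪ (Q1.1.parts.erase (DG Q1)) ∪ Q2.1.parts)

lemma mem_glueParts_iff {E : Finset ℕ} :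
    E ∈ glueParts Q0 Q1 Q2 ↔ E = BG Q1 ∨ E ∈ Q0.1.parts ∨
      (E ∈ Q1.1.parts ∧ E ≠ DG Q1) ∨ E ∈ Q2.1.parts := by
  unfold glueParts
  simp only [Finset.mem_insert, Finset.mem_union, Finset.mem_erase]
  tauto

lemma bnd0 {E : Finset ℕ} (hE : E ∈ Q0.1.parts) {y : ℕ} (hy : y ∈ E) :
    1 ≤ y ∧ y < b := Finset.mem_Ico.1 (Q0.1.le hE hy)

lemma bnd1 {E : Finset ℕ} (hE : E ∈ Q1.1.parts) {y : ℕ} (hy : y ∈ E) :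
    b + 1 ≤ y ∧ y ≤ c := by
  have := Finset.mem_Ico.1 (Q1.1.le hE hy); omega

lemma bnd2 {E : Finset ℕ} (hE : E ∈ Q2.1.parts) {y : ℕ} (hy : y ∈ E) :
    c + 1 ≤ y ∧ y < n := Finset.mem_Ico.1 (Q2.1.le hE hy)

lemma BG_le_c (hb : 0 < b) (hbc : b ≤ c) {y : ℕ} (hy : y ∈ BG Q1) : y ≤ c := by
  rcases (memBG_iff Q1 hb).1 hy with rfl | rfl | ⟨_, _, h⟩ <;> omega

/-- the glued partition as a finpartition of range n -/
def glueFP (hb : 0 < b) (hbc : b ≤ c) (hcn : c < n) : Finpartition (Finset.range n) := by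
  refine ⟨glueParts Q0 Q1 Q2, ?_, ?_, ?_⟩
  · rw [Finset.supIndep_iff_pairwiseDisjoint]
    intro E hE F hF hEF
    rw [Finset.mem_coe, mem_glueParts_iff] at hE hF
    have dBG : ∀ G, G ∈ Q0.1.parts ∨ (G ∈ Q1.1.parts ∧ G ≠ DG Q1) ∨ G ∈ Q2.1.parts →
        Disjoint (BG Q1) G := by
      intro G hG
      rw [Finset.disjoint_left]
      intro y hyB hyG
      rcases (memBG_iff Q1 hb).1 hyB with rfl | rfl | ⟨hyD, hy1, hy2⟩
      · rcases hG with h | ⟨h, _⟩ | h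
        · exact absurd (bnd0 Q0 h hyG) (by omega)
        · exact absurd (bnd1 Q1 h hyG) (by omega)
        · exact absurd (bnd2 Q2 h hyG) (by omega)
      · rcases hG with h | ⟨h, _⟩ | h
        · exact absurd (bnd0 Q0 h hyG) (by omega)
        · exact absurd (bnd1 Q1 h hyG) (by omega)
        · exact absurd (bnd2 Q2 h hyG) (by omega)
      · rcases hG with h | ⟨h, hne⟩ | h
        · exact absurd (bnd0 Q0 h hyG) (by omega)
        · rcases DG_cases Q1 hb with ⟨_, hD⟩ | ⟨_, hD, _⟩
          · rw [hD] at hyD; exact Finset.notMem_empty _ hyD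
          · exact absurd (Q1.1.eq_of_mem_parts h hD hyG hyD) hne
        · exact absurd (bnd2 Q2 h hyG) (by omega)
    rcases hE with rfl | hE' <;> rcases hF with rfl | hF'
    · exact absurd rfl hEF
    · exact dBG F hF'
    · exact (dBG E hE').symm
    · -- both non-BG
      show Disjoint E F
      rw [Finset.disjoint_left]
      intro y hyE hyF
      rcases hE' with h1 | ⟨h1, h1'⟩ | h1 <;> rcases hF' with h2 | ⟨h2, h2'⟩ | h2
      · exact Finset.disjoint_left.1 (Q0.1.disjoint h1 h2 hEF) hyE hyF
      · exfalso
        have p1 := bnd0 Q0 h1 hyE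
        have p2 := bnd1 Q1 h2 hyF
        omega
      · exfalso
        have p1 := bnd0 Q0 h1 hyE
        have p2 := bnd2 Q2 h2 hyF
        omega
      · exfalso
        have p1 := bnd1 Q1 h1 hyE
        have p2 := bnd0 Q0 h2 hyF
        omega
      · exact Finset.disjoint_left.1 (Q1.1.disjoint h1 h2 hEF) hyE hyF
      · exfalso
        have p1 := bnd1 Q1 h1 hyE
        have p2 := bnd2 Q2 h2 hyF
        omega
      · exfalso
        have p1 := bnd2 Q2 h1 hyE
        have p2 := bnd0 Q0 h2 hyF
        omega
      · exfalso
        have p1 := bnd2 Q2 h1 hyE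
        have p2 := bnd1 Q1 h2 hyF
        omega
      · exact Finset.disjoint_left.1 (Q2.1.disjoint h1 h2 hEF) hyE hyF
  · ext e
    rw [Finset.mem_sup, Finset.mem_range]
    constructor
    · rintro ⟨E, hE, heE⟩
      rw [mem_glueParts_iff] at hE
      rcases hE with rfl | h | ⟨h, _⟩ | h
      · rcases (memBG_iff Q1 hb).1 heE with rfl | rfl | ⟨_, _, h2⟩ <;> omega
      · have := bnd0 Q0 h heE; omega
      · have := bnd1 Q1 h heE; omega
      · have := bnd2 Q2 h heE; omega
    · intro he
      rcases Nat.lt_or_ge e 1 with h1 | h1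
      · refine ⟨BG Q1, Finset.mem_insert_self _ _, ?_⟩
        have : e = 0 := by omega
        subst this
        exact (memBG_iff Q1 hb).2 (Or.inl rfl)
      rcases Nat.lt_or_ge e b with h2 | h2
      · have heI : e ∈ Finset.Ico 1 b := Finset.mem_Ico.2 ⟨h1, h2⟩
        refine ⟨Q0.1.part e, ?_, Q0.1.mem_part heI⟩
        rw [mem_glueParts_iff]
        exact Or.inr (Or.inl (Q0.1.part_mem.2 heI))
      rcases Nat.eq_or_lt_of_le h2 with h3 | h3
      · refine ⟨BG Q1, Finset.mem_insert_self _ _, ?_⟩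
        exact (memBG_iff Q1 hb).2 (Or.inr (Or.inl h3.symm))
      rcases Nat.lt_or_ge e (c + 1) with h4 | h4
      · have heI : e ∈ Finset.Ico (b + 1) (c + 1) := Finset.mem_Ico.2 ⟨by omega, h4⟩
        rcases eq_or_ne (Q1.1.part e) (DG Q1) with hD | hD
        · refine ⟨BG Q1, Finset.mem_insert_self _ _, ?_⟩
          refine (memBG_iff Q1 hb).2 (Or.inr (Or.inr ⟨hD ▸ Q1.1.mem_part heI, by omega, by omega⟩))
        · refine ⟨Q1.1.part e, ?_, Q1.1.mem_part heI⟩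
          rw [mem_glueParts_iff]
          exact Or.inr (Or.inr (Or.inl ⟨Q1.1.part_mem.2 heI, hD⟩))
      · have heI : e ∈ Finset.Ico (c + 1) n := Finset.mem_Ico.2 ⟨h4, he⟩
        refine ⟨Q2.1.part e, ?_, Q2.1.mem_part heI⟩
        rw [mem_glueParts_iff]
        exact Or.inr (Or.inr (Or.inr (Q2.1.part_mem.2 heI)))
  · intro hbot
    rw [Finset.bot_eq_empty, mem_glueParts_iff] at hbot
    rcases hbot with h | h | ⟨h, _⟩ | h
    · have : (0 : ℕ) ∈ (∅ : Finset ℕ) := h ▸ (memBG_iff Q1 hb).2 (Or.inl rfl)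
      exact Finset.notMem_empty _ this
    · exact Q0.1.bot_notMem (by rwa [Finset.bot_eq_empty])
    · exact Q1.1.bot_notMem (by rwa [Finset.bot_eq_empty])
    · exact Q2.1.bot_notMem (by rwa [Finset.bot_eq_empty])


lemma zero_not_mem_DG (hb : 0 < b) : 0 ∉ DG Q1 := by
  intro h
  have := Finset.mem_Ico.1 (DG_subset Q1 hb h); omega

lemma b_not_mem_DG (hb : 0 < b) : b ∉ DG Q1 := by
  intro h
  have := Finset.mem_Ico.1 (DG_subset Q1 hb h); omega

lemma cardBG (hb : 0 < b) : (BG Q1).card = (DG Q1).card + 2 := by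
  unfold BG
  rw [Finset.card_insert_of_notMem (by
    rw [Finset.mem_insert]
    push_neg
    exact ⟨by omega, zero_not_mem_DG Q1 hb⟩), Finset.card_insert_of_notMem (b_not_mem_DG Q1 hb)]

lemma evenDG (hb : 0 < b) : Even (DG Q1).card := by
  rcases DG_cases Q1 hb with ⟨_, h⟩ | ⟨_, h, _⟩
  · rw [h]; simp
  · exact Q1.2.2 _ h

def glueNCE (hb : 0 < b) (hbc : b ≤ c) (hcn : c < n) : NCE (Finset.range n) := by
  refine ⟨glueFP Q0 Q1 Q2 hb hbc hcn, ?_, ?_⟩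
  · intro a x y z hax hxy hyz E hE F hF haE hyE hxF hzF
    have hEp := (mem_glueParts_iff Q0 Q1 Q2).1 hE
    have hFp := (mem_glueParts_iff Q0 Q1 Q2).1 hF
    rcases hEp with rfl | hE0 | ⟨hE1, hE1'⟩ | hE2 <;>
      rcases hFp with rfl | hF0 | ⟨hF1, hF1'⟩ | hF2
    · rfl
    · exfalso
      have p1 := bnd0 Q0 hF0 hxF
      have p2 := bnd0 Q0 hF0 hzF
      rcases (memBG_iff Q1 hb).1 hyE with rfl | rfl | ⟨_, h, h'⟩ <;> omega
    · exfalso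
      have px := bnd1 Q1 hF1 hxF
      have pz := bnd1 Q1 hF1 hzF
      rcases DG_cases Q1 hb with ⟨h', _⟩ | ⟨hbc', hDp, hcD⟩
      · omega
      have hyD : y ∈ DG Q1 := by
        rcases (memBG_iff Q1 hb).1 hyE with rfl | rfl | ⟨h', _, _⟩
        · omega
        · omega
        · exact h'
      have hzc : z ≠ c := by
        intro h'
        exact hF1' (Q1.1.eq_of_mem_parts hF1 hDp (h' ▸ hzF) hcD)
      have := Q1.2.1 x y z c hxy hyz (by omega) F hF1 (DG Q1) hDp hxF hzF hyD hcD
      exact hF1' this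
    · exfalso
      have px := bnd2 Q2 hF2 hxF
      have py := BG_le_c Q1 hb hbc hyE
      omega
    · exfalso
      have pa := bnd0 Q0 hE0 haE
      have py := bnd0 Q0 hE0 hyE
      rcases (memBG_iff Q1 hb).1 hxF with rfl | rfl | ⟨_, h, h'⟩ <;> omega
    · exact Q0.2.1 a x y z hax hxy hyz E hE0 F hF0 haE hyE hxF hzF
    · exfalso
      have py := bnd0 Q0 hE0 hyE
      have px := bnd1 Q1 hF1 hxF
      omega
    · exfalso
      have py := bnd0 Q0 hE0 hyE
      have px := bnd2 Q2 hF2 hxF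
      omega
    · exfalso
      have pa := bnd1 Q1 hE1 haE
      have py := bnd1 Q1 hE1 hyE
      rcases DG_cases Q1 hb with ⟨h', _⟩ | ⟨hbc', hDp, hcD⟩
      · omega
      have hxD : x ∈ DG Q1 := by
        rcases (memBG_iff Q1 hb).1 hxF with rfl | rfl | ⟨h', _, _⟩
        · omega
        · omega
        · exact h'
      have hzD : z ∈ DG Q1 := by
        rcases (memBG_iff Q1 hb).1 hzF with rfl | rfl | ⟨h', _, _⟩
        · omega
        · omega
        · exact h'
      exact hE1' (Q1.2.1 a x y z hax hxy hyz E hE1 (DG Q1) hDp haE hyE hxD hzD)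
    · exfalso
      have pa := bnd1 Q1 hE1 haE
      have px := bnd0 Q0 hF0 hxF
      omega
    · exact Q1.2.1 a x y z hax hxy hyz E hE1 F hF1 haE hyE hxF hzF
    · exfalso
      have py := bnd1 Q1 hE1 hyE
      have px := bnd2 Q2 hF2 hxF
      omega
    · exfalso
      have pa := bnd2 Q2 hE2 haE
      have px := BG_le_c Q1 hb hbc hxF
      omega
    · exfalso
      have pa := bnd2 Q2 hE2 haE
      have px := bnd0 Q0 hF0 hxF
      omega
    · exfalso
      have pa := bnd2 Q2 hE2 haE
      have px := bnd1 Q1 hF1 hxF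
      omega
    · exact Q2.2.1 a x y z hax hxy hyz E hE2 F hF2 haE hyE hxF hzF
  · intro E hE
    rcases (mem_glueParts_iff Q0 Q1 Q2).1 hE with rfl | h | ⟨h, _⟩ | h
    · rw [cardBG Q1 hb]
      obtain ⟨t, ht⟩ := evenDG Q1 hb
      exact ⟨t + 1, by omega⟩
    · exact Q0.2.2 E h
    · exact Q1.2.2 E h
    · exact Q2.2.2 E h

lemma BG_mem_glueParts : BG Q1 ∈ glueParts Q0 Q1 Q2 := Finset.mem_insert_self _ _

lemma glue_Bof (hb : 0 < b) (hbc : b ≤ c) (hcn : c < n) :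
    Bof (glueNCE Q0 Q1 Q2 hb hbc hcn) = BG Q1 := by
  apply Finpartition.part_eq_of_mem
  · exact BG_mem_glueParts Q0 Q1 Q2
  · exact (memBG_iff Q1 hb).2 (Or.inl rfl)

lemma glue_bstat (hn : 0 < n) (hb : 0 < b) (hbc : b ≤ c) (hcn : c < n) :
    bstat hn (glueNCE Q0 Q1 Q2 hb hbc hcn) = b := by
  apply le_antisymm
  · apply Finset.min'_le
    rw [Finset.mem_erase, glue_Bof Q0 Q1 Q2 hb hbc hcn]
    exact ⟨by omega, (memBG_iff Q1 hb).2 (Or.inr (Or.inl rfl))⟩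
  · apply Finset.le_min'
    intro y hy
    rw [Finset.mem_erase, glue_Bof Q0 Q1 Q2 hb hbc hcn] at hy
    rcases (memBG_iff Q1 hb).1 hy.2 with rfl | rfl | ⟨_, h, _⟩
    · exact absurd rfl hy.1
    · exact le_refl _
    · omega

lemma glue_cstat (hn : 0 < n) (hb : 0 < b) (hbc : b ≤ c) (hcn : c < n) :
    cstat hn (glueNCE Q0 Q1 Q2 hb hbc hcn) = c := by
  apply le_antisymm
  · apply Finset.max'_le
    intro y hy
    rw [glue_Bof Q0 Q1 Q2 hb hbc hcn] at hy
    exact BG_le_c Q1 hb hbc hy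
  · apply Finset.le_max'
    rw [glue_Bof Q0 Q1 Q2 hb hbc hcn]
    rcases DG_cases Q1 hb with ⟨h, _⟩ | ⟨_, _, h⟩
    · exact (memBG_iff Q1 hb).2 (Or.inr (Or.inl (by omega)))
    · exact (memBG_iff Q1 hb).2 (Or.inr (Or.inr ⟨h, by
        have := Finset.mem_Ico.1 (DG_subset Q1 hb h); omega, by omega⟩))

end Glue

section RoundTrip
variable (hn : 0 < n) (P : NCE (Finset.range n))

lemma restrict0_parts :
    (restrict0 hn P).1.parts = P.1.parts.filter (· ⊆ Finset.Ico 1 (bstat hn P)) := rfl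

lemma restrict2_parts :
    (restrict2 hn P).1.parts = P.1.parts.filter (· ⊆ Finset.Ico (cstat hn P + 1) n) := rfl

lemma restrict1_parts :
    (restrict1 hn P).1.parts = if bstat hn P < cstat hn P then
      insert (Dof hn P) (mparts hn P) else mparts hn P := rfl

lemma DG_restrict1 : DG (restrict1 hn P) = Dof hn P := by
  unfold DG
  rcases lt_or_ge (bstat hn P) (cstat hn P) with hlt | hge
  · apply Finpartition.part_eq_of_mem
    · rw [restrict1_parts, if_pos hlt]
      exact Finset.mem_insert_self _ _
    · exact c_mem_D hn P hlt
  · rw [part_of_not_mem _ (by rw [Finset.mem_Ico]; omega), D_eq_empty hn P (by omega)]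

lemma BG_restrict1 : BG (restrict1 hn P) = Bof P := by
  unfold BG
  rw [DG_restrict1]
  exact (B_eq_insert hn P).symm

lemma mparts_empty (h : ¬ bstat hn P < cstat hn P) : mparts hn P = ∅ := by
  rw [Finset.eq_empty_iff_forall_notMem]
  intro C hC
  rw [mem_mparts_iff] at hC
  obtain ⟨e, he⟩ := P.1.nonempty_of_mem_parts hC.1
  have := Finset.mem_Ico.1 (hC.2 he)
  omega

lemma erase_restrict1 :
    (restrict1 hn P).1.parts.erase (Dof hn P) = mparts hn P := by
  rw [restrict1_parts]
  rcases lt_or_ge (bstat hn P) (cstat hn P) with hlt | hge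
  · rw [if_pos hlt]
    apply Finset.erase_insert
    intro h
    exact D_not_mem_parts hn P hlt (mem_mparts_iff hn P |>.1 h).1
  · rw [if_neg (by omega), mparts_empty hn P (by omega), Finset.erase_empty]

lemma glue_restrict_parts :
    glueParts (restrict0 hn P) (restrict1 hn P) (restrict2 hn P) = P.1.parts := by
  unfold glueParts
  rw [BG_restrict1, DG_restrict1, erase_restrict1, restrict0_parts, restrict2_parts]
  ext C
  rw [Finset.mem_insert, Finset.mem_union, Finset.mem_union]
  constructor
  · rintro (rfl | (h | h) | h)
    · exact B_mem_parts hn P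
    · exact (Finset.mem_filter.1 h).1
    · exact (mem_mparts_iff hn P |>.1 h).1
    · exact (Finset.mem_filter.1 h).1
  · intro hC
    rcases eq_or_ne C (Bof P) with rfl | hne
    · exact Or.inl rfl
    rcases straddle hn P hC hne with h | h | h
    · exact Or.inr (Or.inl (Or.inl (Finset.mem_filter.2 ⟨hC, h⟩)))
    · exact Or.inr (Or.inl (Or.inr ((mem_mparts_iff hn P).2 ⟨hC, h⟩)))
    · exact Or.inr (Or.inr (Finset.mem_filter.2 ⟨hC, h⟩))

lemma glue_restrict_eq (hcn' : cstat hn P < n) :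
    glueNCE (restrict0 hn P) (restrict1 hn P) (restrict2 hn P)
      (b_pos hn P) (b_le_c hn P) hcn' = P :=
  Subtype.ext (Finpartition.ext (glue_restrict_parts hn P))

end RoundTrip

section GlueRound
variable (Q0 : NCE (Finset.Ico 1 b)) (Q1 : NCE (Finset.Ico (b + 1) (c + 1)))
  (Q2 : NCE (Finset.Ico (c + 1) n))
  (hn : 0 < n) (hb : 0 < b) (hbc : b ≤ c) (hcn : c < n)

lemma glue_parts_eq :
    (glueNCE Q0 Q1 Q2 hb hbc hcn).1.parts = glueParts Q0 Q1 Q2 := rfl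

lemma Dof_glue : Dof hn (glueNCE Q0 Q1 Q2 hb hbc hcn) = DG Q1 := by
  unfold Dof
  rw [glue_bstat Q0 Q1 Q2 hn hb hbc hcn, glue_Bof Q0 Q1 Q2 hb hbc hcn]
  unfold BG
  rw [Finset.erase_insert (by
    rw [Finset.mem_insert]
    push_neg
    exact ⟨by omega, zero_not_mem_DG Q1 hb⟩), Finset.erase_insert (b_not_mem_DG Q1 hb)]

include hbc in
lemma filter0_glue :
    (glueParts Q0 Q1 Q2).filter (· ⊆ Finset.Ico 1 b) = Q0.1.parts := by
  ext C
  rw [Finset.mem_filter, mem_glueParts_iff]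
  constructor
  · rintro ⟨rfl | h | ⟨h, _⟩ | h, hsub⟩
    · exfalso
      have h0 : (0 : ℕ) ∈ BG Q1 := by unfold BG; exact Finset.mem_insert_self _ _
      have := Finset.mem_Ico.1 (hsub h0)
      omega
    · exact h
    · exfalso
      obtain ⟨e, he⟩ := Q1.1.nonempty_of_mem_parts h
      have h1 := bnd1 Q1 h he
      have h2 := Finset.mem_Ico.1 (hsub he)
      omega
    · exfalso
      obtain ⟨e, he⟩ := Q2.1.nonempty_of_mem_parts h
      have h1 := bnd2 Q2 h he
      have h2 := Finset.mem_Ico.1 (hsub he)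
      omega
  · intro h
    exact ⟨Or.inr (Or.inl h), Q0.1.le h⟩

include hbc in
lemma filter2_glue :
    (glueParts Q0 Q1 Q2).filter (· ⊆ Finset.Ico (c + 1) n) = Q2.1.parts := by
  ext C
  rw [Finset.mem_filter, mem_glueParts_iff]
  constructor
  · rintro ⟨rfl | h | ⟨h, _⟩ | h, hsub⟩
    · exfalso
      have h0 : (0 : ℕ) ∈ BG Q1 := by unfold BG; exact Finset.mem_insert_self _ _
      have := Finset.mem_Ico.1 (hsub h0)
      omega
    · exfalso
      obtain ⟨e, he⟩ := Q0.1.nonempty_of_mem_parts h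
      have h1 := bnd0 Q0 h he
      have h2 := Finset.mem_Ico.1 (hsub he)
      omega
    · exfalso
      obtain ⟨e, he⟩ := Q1.1.nonempty_of_mem_parts h
      have h1 := bnd1 Q1 h he
      have h2 := Finset.mem_Ico.1 (hsub he)
      omega
    · exact h
  · intro h
    exact ⟨Or.inr (Or.inr (Or.inr h)), Q2.1.le h⟩

lemma filter1_glue :
    (glueParts Q0 Q1 Q2).filter (· ⊆ Finset.Ico (b + 1) (c + 1)) =
      Q1.1.parts.erase (DG Q1) := by
  ext C
  rw [Finset.mem_filter, mem_glueParts_iff, Finset.mem_erase]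
  constructor
  · rintro ⟨rfl | h | ⟨h, h'⟩ | h, hsub⟩
    · exfalso
      have h0 : (0 : ℕ) ∈ BG Q1 := by unfold BG; exact Finset.mem_insert_self _ _
      have := Finset.mem_Ico.1 (hsub h0)
      omega
    · exfalso
      obtain ⟨e, he⟩ := Q0.1.nonempty_of_mem_parts h
      have h1 := bnd0 Q0 h he
      have h2 := Finset.mem_Ico.1 (hsub he)
      omega
    · exact ⟨h', h⟩
    · exfalso
      obtain ⟨e, he⟩ := Q2.1.nonempty_of_mem_parts h
      have h1 := bnd2 Q2 h he
      have h2 := Finset.mem_Ico.1 (hsub he)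
      omega
  · rintro ⟨h', h⟩
    exact ⟨Or.inr (Or.inr (Or.inl ⟨h, h'⟩)), Q1.1.le h⟩

lemma restrict0_glue_parts :
    (restrict0 hn (glueNCE Q0 Q1 Q2 hb hbc hcn)).1.parts = Q0.1.parts := by
  rw [restrict0_parts, glue_bstat Q0 Q1 Q2 hn hb hbc hcn, glue_parts_eq]
  exact filter0_glue Q0 Q1 Q2 hbc

lemma restrict2_glue_parts :
    (restrict2 hn (glueNCE Q0 Q1 Q2 hb hbc hcn)).1.parts = Q2.1.parts := by
  rw [restrict2_parts, glue_cstat Q0 Q1 Q2 hn hb hbc hcn, glue_parts_eq]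
  exact filter2_glue Q0 Q1 Q2 hbc

lemma mparts_glue :
    mparts hn (glueNCE Q0 Q1 Q2 hb hbc hcn) = Q1.1.parts.erase (DG Q1) := by
  unfold mparts
  rw [glue_bstat Q0 Q1 Q2 hn hb hbc hcn, glue_cstat Q0 Q1 Q2 hn hb hbc hcn, glue_parts_eq]
  exact filter1_glue Q0 Q1 Q2

lemma restrict1_glue_parts :
    (restrict1 hn (glueNCE Q0 Q1 Q2 hb hbc hcn)).1.parts = Q1.1.parts := by
  rw [restrict1_parts, glue_bstat Q0 Q1 Q2 hn hb hbc hcn, glue_cstat Q0 Q1 Q2 hn hb hbc hcn,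
    Dof_glue Q0 Q1 Q2 hn hb hbc hcn, mparts_glue Q0 Q1 Q2 hn hb hbc hcn]
  rcases lt_or_ge b c with hlt | hge
  · rw [if_pos hlt]
    apply Finset.insert_erase
    rcases DG_cases Q1 hb with ⟨h, _⟩ | ⟨_, h, _⟩
    · omega
    · exact h
  · rw [if_neg (by omega)]
    have : Q1.1.parts = ∅ := by
      rw [Finpartition.parts_eq_empty_iff, Finset.bot_eq_empty, Finset.Ico_eq_empty_iff]
      omega
    rw [this, Finset.erase_empty]

end GlueRound

section FiberEquiv
variable (hn : 0 < n) (hb : 0 < b) (hbc : b ≤ c) (hcn : c < n)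

lemma copyNCE_eq_of_parts {s t : Finset ℕ} (h : s = t) (A : NCE s) (B : NCE t)
    (hp : A.1.parts = B.1.parts) : copyNCE h A = B := Subtype.ext (Finpartition.ext hp)

lemma copyNCE_refl {s : Finset ℕ} (h : s = s) (A : NCE s) : copyNCE h A = A :=
  Subtype.ext (Finpartition.ext rfl)

def fiberEquiv : {P : NCE (Finset.range n) // bstat hn P = b ∧ cstat hn P = c} ≃
    (NCE (Finset.Ico 1 b) × NCE (Finset.Ico (b + 1) (c + 1)) × NCE (Finset.Ico (c + 1) n)) where
  toFun P := (copyNCE (by rw [P.2.1]) (restrict0 hn P.1),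
              copyNCE (by rw [P.2.1, P.2.2]) (restrict1 hn P.1),
              copyNCE (by rw [P.2.2]) (restrict2 hn P.1))
  invFun Q := ⟨glueNCE Q.1 Q.2.1 Q.2.2 hb hbc hcn,
    glue_bstat _ _ _ hn hb hbc hcn, glue_cstat _ _ _ hn hb hbc hcn⟩
  left_inv := by
    rintro ⟨P, hP1, hP2⟩
    apply Subtype.ext
    dsimp only
    subst hP1
    subst hP2
    rw [copyNCE_refl, copyNCE_refl, copyNCE_refl]
    exact glue_restrict_eq hn P hcn
  right_inv := by
    rintro ⟨Q0, Q1, Q2⟩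
    dsimp only
    refine Prod.ext ?_ (Prod.ext ?_ ?_)
    · exact copyNCE_eq_of_parts _ _ _ (restrict0_glue_parts Q0 Q1 Q2 hn hb hbc hcn)
    · exact copyNCE_eq_of_parts _ _ _ (restrict1_glue_parts Q0 Q1 Q2 hn hb hbc hcn)
    · exact copyNCE_eq_of_parts _ _ _ (restrict2_glue_parts Q0 Q1 Q2 hn hb hbc hcn)

end FiberEquiv

section Parity
variable (hn : 0 < n) (P : NCE (Finset.range n))

lemma even_parts_sum {s : Finset ℕ} (Q : NCE s) : Even s.card := by
  have h := Q.1.sum_card_parts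
  rw [← h]
  rw [even_iff_two_dvd]
  apply Finset.dvd_sum
  intro i hi
  exact (Q.2.2 i hi).two_dvd

lemma even_bstat_sub_one : Even (bstat hn P - 1) := by
  have := even_parts_sum (restrict0 hn P)
  rwa [Nat.card_Ico] at this

lemma even_cstat_sub_bstat : Even (cstat hn P - bstat hn P) := by
  have := even_parts_sum (restrict1 hn P)
  rw [Nat.card_Ico] at this
  have h2 : cstat hn P + 1 - (bstat hn P + 1) = cstat hn P - bstat hn P := by omega
  rwa [h2] at this

end Parity

lemma Fnum_zero : Fnum 0 = 1 := by
  rw [Fnum_eq_card_NCE]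
  exact NCE_unique_empty _ (by simp)

/-- the main recurrence -/
lemma Fnum_rec (k : ℕ) :
    Fnum (k + 1) =
      ∑ x ∈ Finset.Nat.antidiagonalTuple 3 k, Fnum (x 0) * Fnum (x 1) * Fnum (x 2) := by
  classical
  have hn : 0 < 2 * k + 2 := by omega
  have h1 : Fnum (k + 1) = Nat.card (NCE (Finset.range (2 * k + 2))) := by
    rw [Fnum_eq_card_NCE, show 2 * (k + 1) = 2 * k + 2 by omega]
  rw [h1]
  have hmem : ∀ P : NCE (Finset.range (2 * k + 2)),
      (bstat hn P, cstat hn P) ∈ (Finset.range (2 * k + 2)) ×ˢ (Finset.range (2 * k + 2)) := by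
    intro P
    rw [Finset.mem_product]
    have h2 := b_le_c hn P
    have h3 := c_lt_n hn P
    constructor
    · show bstat hn P ∈ Finset.range (2 * k + 2)
      rw [Finset.mem_range]; omega
    · show cstat hn P ∈ Finset.range (2 * k + 2)
      rw [Finset.mem_range]; omega
  rw [card_fiberwise_nat (fun P => (bstat hn P, cstat hn P)) _ hmem]
  have hTsub : (Finset.Nat.antidiagonalTuple 3 k).image
      (fun x : Fin 3 → ℕ => (2 * x 0 + 1, 2 * x 0 + 2 * x 1 + 1)) ⊆
      (Finset.range (2 * k + 2)) ×ˢ (Finset.range (2 * k + 2)) := by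
    intro p hp
    rw [Finset.mem_image] at hp
    obtain ⟨x, hx, rfl⟩ := hp
    rw [Finset.Nat.mem_antidiagonalTuple, Fin.sum_univ_three] at hx
    rw [Finset.mem_product]
    constructor
    · show 2 * x 0 + 1 ∈ Finset.range (2 * k + 2)
      rw [Finset.mem_range]; omega
    · show 2 * x 0 + 2 * x 1 + 1 ∈ Finset.range (2 * k + 2)
      rw [Finset.mem_range]; omega
  rw [← Finset.sum_subset hTsub]
  swap
  · -- fibers outside the image are empty
    intro p hpS hpT
    rcases isEmpty_or_nonempty
      {P : NCE (Finset.range (2 * k + 2)) // (bstat hn P, cstat hn P) = p} with hE | hNE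
    · exact Nat.card_of_isEmpty
    exfalso
    obtain ⟨⟨P, hP⟩⟩ := hNE
    apply hpT
    rw [Finset.mem_image]
    obtain ⟨t0, ht0⟩ := even_bstat_sub_one hn P
    obtain ⟨t1, ht1⟩ := even_cstat_sub_bstat hn P
    have hb0 := b_pos hn P
    have hbc0 := b_le_c hn P
    have hcn0 := c_lt_n hn P
    rw [Prod.ext_iff] at hP
    obtain ⟨hP1, hP2⟩ := hP
    refine ⟨![t0, t1, k - t0 - t1], ?_, ?_⟩
    · rw [Finset.Nat.mem_antidiagonalTuple, Fin.sum_univ_three]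
      show t0 + t1 + (k - t0 - t1) = k
      omega
    · show (2 * t0 + 1, 2 * t0 + 2 * t1 + 1) = p
      rw [Prod.ext_iff]
      constructor
      · show 2 * t0 + 1 = p.1
        rw [← hP1]
        show 2 * t0 + 1 = bstat hn P
        omega
      · show 2 * t0 + 2 * t1 + 1 = p.2
        rw [← hP2]
        show 2 * t0 + 2 * t1 + 1 = cstat hn P
        omega
  · rw [Finset.sum_image]
    swap
    · intro x hx y hy hxy
      simp only [Finset.mem_coe] at hx hy
      rw [Finset.Nat.mem_antidiagonalTuple, Fin.sum_univ_three] at hx hy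
      rw [Prod.mk.injEq] at hxy
      obtain ⟨hxy1, hxy2⟩ := hxy
      have e0 : x 0 = y 0 := by omega
      have e1 : x 1 = y 1 := by omega
      have e2 : x 2 = y 2 := by omega
      funext i
      have : (i : ℕ) < 3 := i.isLt
      match i with
      | ⟨0, _⟩ => exact e0
      | ⟨1, _⟩ => exact e1
      | ⟨2, _⟩ => exact e2
    apply Finset.sum_congr rfl
    intro x hx
    rw [Finset.Nat.mem_antidiagonalTuple, Fin.sum_univ_three] at hx
    have hb' : 0 < 2 * x 0 + 1 := by omega
    have hbc' : 2 * x 0 + 1 ≤ 2 * x 0 + 2 * x 1 + 1 := by omega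
    have hcn' : 2 * x 0 + 2 * x 1 + 1 < 2 * k + 2 := by omega
    have hEq : {P : NCE (Finset.range (2 * k + 2)) //
        (bstat hn P, cstat hn P) = (2 * x 0 + 1, 2 * x 0 + 2 * x 1 + 1)} ≃
        (NCE (Finset.Ico 1 (2 * x 0 + 1)) ×
          (NCE (Finset.Ico (2 * x 0 + 1 + 1) (2 * x 0 + 2 * x 1 + 1 + 1)) ×
           NCE (Finset.Ico (2 * x 0 + 2 * x 1 + 1 + 1) (2 * k + 2)))) := by
      refine (Equiv.subtypeEquivRight ?_).trans (fiberEquiv hn hb' hbc' hcn')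
      intro P
      rw [Prod.mk.injEq]
    rw [Nat.card_congr hEq, Nat.card_prod, Nat.card_prod]
    rw [card_NCE_Ico 1 (2 * x 0 + 1) (x 0) (by omega),
      card_NCE_Ico _ _ (x 1) (by omega),
      card_NCE_Ico _ _ (x 2) (by omega)]
    ring

end NatPart
end NCEdev

/-- The numbers `F_k = |NC_h(2k)|` satisfy `F_0 = 1` and the recurrence
`F_{k+1} = Σ_{x₀+x₁+x₂=k} F_{x₀} F_{x₁} F_{x₂}`. -/
theorem Fnum_recurrence :
    Fnum 0 = 1 ∧ ∀ k : ℕ,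
      Fnum (k + 1) =
        ∑ x ∈ Finset.Nat.antidiagonalTuple 3 k, Fnum (x 0) * Fnum (x 1) * Fnum (x 2) := by
  exact ⟨Fnum_zero, Fnum_rec⟩
end NCEdev
end

section
/- If u ∈ M_n(A) is a cubic unitary over a unital C*-algebra A, then the 2n×2n matrix w = [[α, β],[β, α]], where α_{ij} = (u_{ij}²+u_{ij})/2 and β_{ij} = (u_{ij}²−u_{ij})/2, is a magic unitary: all its entries are projections and each row and column sums to 1. -/
/-!
Row orthogonality together with `∑ₖ u_ik² = 1` gives `u_ij³ = u_ij`, so `(u_ij² ± u_ij)/2` are the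
spectral projections of the self-adjoint `u_ij` onto the eigenvalues `±1`. Their sum is `u_ij²`,
whose row and column sums are `1` by orthogonality of `u`, and each row or column of `w` meets
`α` and `β` once in the same position.
-/

open Matrix

section Tripotent

variable {𝕜 A : Type*} [Field 𝕜] [NeZero (2 : 𝕜)] [Ring A] [Algebra 𝕜 A]

lemma isIdempotentElem_inv_two_smul_sq_add_self {x : A} (hx : x ^ 3 = x) :
    IsIdempotentElem ((2 : 𝕜)⁻¹ • (x ^ 2 + x)) := by
  have hsq : (x ^ 2 + x) * (x ^ 2 + x) = (2 : 𝕜) • (x ^ 2 + x) := by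
    calc (x ^ 2 + x) * (x ^ 2 + x) = x ^ 3 * x + 2 * x ^ 3 + x ^ 2 := by noncomm_ring
      _ = (2 : 𝕜) • (x ^ 2 + x) := by rw [hx, ← pow_two, ofNat_smul_eq_nsmul]; noncomm_ring
  rw [IsIdempotentElem, smul_mul_smul_comm, hsq, smul_smul, mul_assoc,
    inv_mul_cancel₀ two_ne_zero, mul_one]

lemma isIdempotentElem_inv_two_smul_sq_sub_self {x : A} (hx : x ^ 3 = x) :
    IsIdempotentElem ((2 : 𝕜)⁻¹ • (x ^ 2 - x)) := by
  have hneg : (-x) ^ 3 = -x := by rw [Odd.neg_pow (by decide), hx]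
  simpa [sub_eq_add_neg] using isIdempotentElem_inv_two_smul_sq_add_self (𝕜 := 𝕜) hneg

variable [StarRing 𝕜] [StarRing A] [StarModule 𝕜 A]

lemma IsSelfAdjoint.isStarProjection_inv_two_smul_sq_add_self {x : A} (hsa : IsSelfAdjoint x)
    (hx : x ^ 3 = x) : IsStarProjection ((2 : 𝕜)⁻¹ • (x ^ 2 + x)) :=
  ⟨isIdempotentElem_inv_two_smul_sq_add_self hx,
    (IsSelfAdjoint.ofNat 2).inv₀.smul ((hsa.pow 2).add hsa)⟩

lemma IsSelfAdjoint.isStarProjection_inv_two_smul_sq_sub_self {x : A} (hsa : IsSelfAdjoint x)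
    (hx : x ^ 3 = x) : IsStarProjection ((2 : 𝕜)⁻¹ • (x ^ 2 - x)) :=
  ⟨isIdempotentElem_inv_two_smul_sq_sub_self hx,
    (IsSelfAdjoint.ofNat 2).inv₀.smul ((hsa.pow 2).sub hsa)⟩

end Tripotent

lemma pow_three_eq_self_of_sum_mul_self_eq_one {ι A : Type*} [Fintype ι] [Ring A] {v : ι → A}
    (hv : ∑ k, v k * v k = 1) (horth : Pairwise fun j k => v j * v k = 0) (j : ι) :
    v j ^ 3 = v j := by
  calc v j ^ 3 = v j * ∑ k, v k * v k := by
        rw [Finset.mul_sum, Finset.sum_eq_single j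
          (fun k _ hk => by rw [← mul_assoc, horth hk.symm, zero_mul]) (by simp),
          ← mul_assoc, pow_three']
    _ = v j := by rw [hv, mul_one]

lemma sum_fromBlocks_self_row_eq_one {m n R : Type*} [Fintype n] [AddCommMonoid R] [One R]
    {α β : Matrix m n R} (h : ∀ i, ∑ j, (α i j + β i j) = 1) (i : m ⊕ m) :
    ∑ j, fromBlocks α β β α i j = 1 := by
  rcases i with i | i
  · simpa [Fintype.sum_sum_type, Finset.sum_add_distrib] using h i
  · simpa [Fintype.sum_sum_type, Finset.sum_add_distrib, add_comm] using h i

lemma sum_fromBlocks_self_col_eq_one {m n R : Type*} [Fintype m] [AddCommMonoid R] [One R]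
    {α β : Matrix m n R} (h : ∀ j, ∑ i, (α i j + β i j) = 1) (j : n ⊕ n) :
    ∑ i, fromBlocks α β β α i j = 1 := by
  have := sum_fromBlocks_self_row_eq_one (α := αᵀ) (β := βᵀ) h j
  rwa [← fromBlocks_transpose] at this

lemma sum_mul_self_row_eq_one {n A : Type*} [Fintype n] [DecidableEq n] [Semiring A]
    {u : Matrix n n A} (h : u * uᵀ = 1) (i : n) : ∑ j, u i j * u i j = 1 := by
  simpa [mul_apply] using congr_fun₂ h i i

theorem cubic_to_sudoku_general {A : Type*} [NormedRing A] [StarRing A]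
    [NormedAlgebra ℂ A] [StarModule ℂ A] {n : ℕ}
    (u : Matrix (Fin n) (Fin n) A)
    (hsa : ∀ i j, IsSelfAdjoint (u i j))
    (horth₁ : u * u.transpose = 1) (horth₂ : u.transpose * u = 1)
    (hrow : ∀ i j k, j ≠ k → u i j * u i k = 0) :
    let α : Matrix (Fin n) (Fin n) A := fun i j => (2 : ℂ)⁻¹ • (u i j ^ 2 + u i j)
    let β : Matrix (Fin n) (Fin n) A := fun i j => (2 : ℂ)⁻¹ • (u i j ^ 2 - u i j)
    let w := Matrix.fromBlocks α β β α
    (∀ i j, IsSelfAdjoint (w i j) ∧ IsIdempotentElem (w i j)) ∧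
      (∀ i, ∑ j, w i j = 1) ∧ (∀ j, ∑ i, w i j = 1) := by
  intro α β w
  have hcube i j : u i j ^ 3 = u i j :=
    pow_three_eq_self_of_sum_mul_self_eq_one (sum_mul_self_row_eq_one horth₁ i)
      (fun _ _ => hrow i _ _) j
  have hw : ∀ i j, IsStarProjection (w i j) := by
    rintro (i | i) (j | j)
    exacts [(hsa i j).isStarProjection_inv_two_smul_sq_add_self (hcube i j),
      (hsa i j).isStarProjection_inv_two_smul_sq_sub_self (hcube i j),
      (hsa i j).isStarProjection_inv_two_smul_sq_sub_self (hcube i j),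
      (hsa i j).isStarProjection_inv_two_smul_sq_add_self (hcube i j)]
  have hαβ i j : α i j + β i j = u i j * u i j := by
    simp only [α, β, pow_two]
    module
  refine ⟨fun i j => ⟨(hw i j).isSelfAdjoint, (hw i j).isIdempotentElem⟩,
    sum_fromBlocks_self_row_eq_one fun i => ?_, sum_fromBlocks_self_col_eq_one fun j => ?_⟩
  · simpa only [hαβ] using sum_mul_self_row_eq_one horth₁ i
  · simpa only [hαβ, transpose_apply] using
      sum_mul_self_row_eq_one (u := uᵀ) (by rwa [transpose_transpose]) j

/-- If `u` is an `n×n` cubic unitary over a unital C*-algebra, then the `2n×2n` matrix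
`w = [[α, β],[β, α]]`, with `α_{ij} = (u_{ij}²+u_{ij})/2` and `β_{ij} = (u_{ij}²−u_{ij})/2`,
is a magic unitary: all entries are projections and each row and column sums to `1`. -/
theorem cubic_to_sudoku {A : Type*} [NormedRing A] [StarRing A] [CStarRing A]
    [NormedAlgebra ℂ A] [StarModule ℂ A] [CompleteSpace A] {n : ℕ}
    (u : Matrix (Fin n) (Fin n) A)
    (hsa : ∀ i j, IsSelfAdjoint (u i j))
    (horth₁ : u * u.transpose = 1) (horth₂ : u.transpose * u = 1)
    (hrow : ∀ i j k, j ≠ k → u i j * u i k = 0)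
    (hcol : ∀ i j k, j ≠ k → u j i * u k i = 0) :
    let α : Matrix (Fin n) (Fin n) A := fun i j => (2 : ℂ)⁻¹ • (u i j ^ 2 + u i j)
    let β : Matrix (Fin n) (Fin n) A := fun i j => (2 : ℂ)⁻¹ • (u i j ^ 2 - u i j)
    let w := Matrix.fromBlocks α β β α
    (∀ i j, IsSelfAdjoint (w i j) ∧ IsIdempotentElem (w i j)) ∧
      (∀ i, ∑ j, w i j = 1) ∧ (∀ j, ∑ i, w i j = 1) :=
  cubic_to_sudoku_general u hsa horth₁ horth₂ hrow
end

section
/- If w = [[a, b],[b, a]] is a 2n×2n sudoku unitary (magic unitary of this block form), then the n×n matrix u = a − b has self-adjoint entries, is orthogonal (u u^t = u^t u = 1), and is cubic: u_{ij}u_{ik} = 0 and u_{ji}u_{ki} = 0 for j ≠ k. -/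
/-!
Projections summing to `1` in a C⋆-algebra are pairwise orthogonal, so each row and each column
of `w` is an orthogonal family. Two entries `aᵢⱼ - bᵢⱼ` and `aᵢₖ - bᵢₖ` of `u` on one row (or
column) are differences of entries of a single row (or column) of `w`; their product is therefore
`0` for `j ≠ k` and `aᵢⱼ + bᵢⱼ` for `j = k`. Orthogonality of `u` follows, since summing
`aᵢⱼ + bᵢⱼ` over `j` (or over `i`) gives a row (or column) sum of `w`.
-/

open Matrix Finset

theorem IsStarProjection.pairwise_mul_eq_zero_of_sum_eq_one {A : Type*} [NormedRing A]
    [StarRing A] [CStarRing A] [PartialOrder A] [StarOrderedRing A] {ι : Type*} [Fintype ι]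
    {p : ι → A} (hp : ∀ i, IsStarProjection (p i)) (hsum : ∑ i, p i = 1) :
    Pairwise fun i j => p i * p j = 0 := by
  classical
  intro i j hij
  have hterm : ∀ k, star (p k * p i) * (p k * p i) = p i * p k * p i := fun k => by
    rw [star_mul, (hp i).isSelfAdjoint.star_eq, (hp k).isSelfAdjoint.star_eq, mul_assoc,
      ← mul_assoc (p k), (hp k).isIdempotentElem.eq, mul_assoc]
  -- `∑ₖ pᵢ pₖ pᵢ = pᵢ`, and the `k = i` term alone already gives `pᵢ`.
  have hrest : ∑ k ∈ univ.erase i, star (p k * p i) * (p k * p i) = 0 := by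
    have htotal : ∑ k, star (p k * p i) * (p k * p i) = p i := by
      simp_rw [hterm, ← Finset.sum_mul, ← Finset.mul_sum, hsum, mul_one,
        (hp i).isIdempotentElem.eq]
    rwa [← add_sum_erase _ _ (mem_univ i), hterm i, (hp i).isIdempotentElem.eq,
      (hp i).isIdempotentElem.eq, add_eq_left] at htotal
  have hji : p j * p i = 0 := (CStarRing.star_mul_self_eq_zero_iff _).1 <|
    (sum_eq_zero_iff_of_nonneg fun k _ => star_mul_self_nonneg _).1 hrest j
      (mem_erase.2 ⟨hij.symm, mem_univ j⟩)
  calc p i * p j = star (p j * p i) := by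
        rw [star_mul, (hp i).isSelfAdjoint.star_eq, (hp j).isSelfAdjoint.star_eq]
    _ = 0 := by rw [hji, star_zero]

theorem sub_mul_sub_eq_ite_of_pairwise_mul_eq_zero {R : Type*} [Ring R] {ι : Type*}
    [DecidableEq ι] {p : ι ⊕ ι → R} (hp : ∀ x, IsIdempotentElem (p x))
    (horth : Pairwise fun x y => p x * p y = 0) (i k : ι) :
    (p (.inl i) - p (.inr i)) * (p (.inl k) - p (.inr k)) =
      if i = k then p (.inl i) + p (.inr i) else 0 := by
  split_ifs with hik
  · subst hik
    rw [sub_mul, mul_sub, mul_sub, (hp _).eq, (hp _).eq, horth (by simp), horth (by simp)]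
    abel
  · rw [sub_mul, mul_sub, mul_sub, horth (by simpa), horth (by simp), horth (by simp),
      horth (by simpa)]
    abel

/-- If `w = [[a, b],[b, a]]` is a `2n×2n` sudoku unitary (a magic unitary of this block
form) over a C*-algebra, then `u = a − b` has self-adjoint entries, is orthogonal
(`u uᵀ = uᵀ u = 1`), and is cubic: distinct entries on the same row or column multiply
to zero. -/
theorem sudoku_to_cubic {A : Type*} [NormedRing A] [StarRing A] [CStarRing A]
    [NormedAlgebra ℂ A] [StarModule ℂ A] [CompleteSpace A] {n : ℕ}
    (a b : Matrix (Fin n) (Fin n) A)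
    (hproj : ∀ i j, IsSelfAdjoint (Matrix.fromBlocks a b b a i j) ∧
      IsIdempotentElem (Matrix.fromBlocks a b b a i j))
    (hrow : ∀ i, ∑ j, Matrix.fromBlocks a b b a i j = 1)
    (hcol : ∀ j, ∑ i, Matrix.fromBlocks a b b a i j = 1) :
    (∀ i j, IsSelfAdjoint ((a - b) i j)) ∧
      (a - b) * (a - b).transpose = 1 ∧ (a - b).transpose * (a - b) = 1 ∧
      (∀ i j k, j ≠ k → (a - b) i j * (a - b) i k = 0) ∧
      (∀ i j k, j ≠ k → (a - b) j i * (a - b) k i = 0) := by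
  let _ : CStarAlgebra A := ⟨⟩
  let _ := CStarAlgebra.spectralOrder A
  have := CStarAlgebra.spectralOrderedRing A
  set w := fromBlocks a b b a
  have hw : ∀ i j, IsStarProjection (w i j) := fun i j => ⟨(hproj i j).2, (hproj i j).1⟩
  have hrowProd : ∀ i j k, (a - b) i j * (a - b) i k = if j = k then a i j + b i j else 0 :=
    fun i => sub_mul_sub_eq_ite_of_pairwise_mul_eq_zero (p := w (.inl i))
      (fun x => (hw _ x).isIdempotentElem)
      (IsStarProjection.pairwise_mul_eq_zero_of_sum_eq_one (hw _) (hrow _))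
  have hcolProd : ∀ i j k, (a - b) j i * (a - b) k i = if j = k then a j i + b j i else 0 :=
    fun i => sub_mul_sub_eq_ite_of_pairwise_mul_eq_zero (p := fun x => w x (.inl i))
      (fun x => (hw x _).isIdempotentElem)
      (IsStarProjection.pairwise_mul_eq_zero_of_sum_eq_one (hw · _) (hcol _))
  have hrowSum : ∀ i, ∑ j, (a i j + b i j) = 1 := fun i => by
    simpa [w, Fintype.sum_sum_type, sum_add_distrib] using hrow (.inl i)
  have hcolSum : ∀ j, ∑ i, (a i j + b i j) = 1 := fun j => by
    simpa [w, Fintype.sum_sum_type, sum_add_distrib] using hcol (.inl j)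
  refine ⟨fun i j => (hproj (.inl i) (.inl j)).1.sub (hproj (.inl i) (.inr j)).1, ?_, ?_,
    fun i j k hjk => by rw [hrowProd, if_neg hjk], fun i j k hjk => by rw [hcolProd, if_neg hjk]⟩
  · ext i k
    simp only [mul_apply, transpose_apply, hcolProd, one_apply]
    split_ifs <;> simp [hrowSum]
  · ext j k
    simp only [mul_apply, transpose_apply, hrowProd, one_apply]
    split_ifs <;> simp [hcolSum]
end

section
/- The Gram matrix G_{kn}(p,q) = n^{|p∨q|} on non-crossing partitions satisfies the orthogonality estimate: for the rescaled matrix H(p,q) = n^{|p∨q| − (|p|+|q|)/2}, one has H(p,p) = 1 and |p∨q| < (|p|+|q|)/2 for p ≠ q, so the off-diagonal entries tend to 0 as n → ∞. -/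
open Filter

/-- The number of blocks of a partition (given as a setoid). -/
noncomputable def numBlocks {α : Type*} (s : Setoid α) : ℕ := Nat.card (Quotient s)

lemma numBlocks_lt_of_lt {α : Type*} [Finite α] {p q : Setoid α} (h : p ≤ q) (hne : p ≠ q) :
    numBlocks q < numBlocks p := by
  classical
  have : Fintype α := Fintype.ofFinite α
  let f : Quotient p → Quotient q := Quotient.map' id (fun a b hab => h hab)
  have hs : Function.Surjective f := by
    intro x
    induction x using Quotient.ind with
    | _ a => exact ⟨Quotient.mk p a, rfl⟩
  have hi : ¬ Function.Injective f := by
    intro hinj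
    apply hne
    apply le_antisymm h
    intro a b hab
    have : f (Quotient.mk p a) = f (Quotient.mk p b) := Quotient.sound' hab
    exact Quotient.exact (hinj this)
  have hF1 : Fintype (Quotient p) := Quotient.fintype p
  have hF2 : Fintype (Quotient q) := Quotient.fintype q
  have := Fintype.card_lt_of_surjective_not_injective f hs hi
  simpa [numBlocks, Nat.card_eq_fintype_card] using this

/-- For the rescaled Gram matrix `H(p,q) = n^{|p∨q| − (|p|+|q|)/2}` on partitions,
the diagonal entries are `1`, while for `p ≠ q` the exponent is negative
(`|p∨q| < (|p|+|q|)/2`), so the off-diagonal entries tend to `0` as `n → ∞`. -/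
theorem gram_orthogonality_estimate {k : ℕ} (p q : Setoid (Fin k)) :
    (∀ n : ℕ, (n : ℝ) ^ ((numBlocks (p ⊔ p) : ℝ) - ((numBlocks p : ℝ) + numBlocks p) / 2) = 1) ∧
    (p ≠ q →
      2 * numBlocks (p ⊔ q) < numBlocks p + numBlocks q ∧
      Tendsto (fun n : ℕ =>
          (n : ℝ) ^ ((numBlocks (p ⊔ q) : ℝ) - ((numBlocks p : ℝ) + numBlocks q) / 2))
        atTop (nhds 0)) := by
  constructor
  · intro n
    rw [sup_idem]
    ring_nf
    simp [Real.rpow_natCast]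
  · intro hne
    have h1 : numBlocks (p ⊔ q) < numBlocks p ∨ numBlocks (p ⊔ q) < numBlocks q := by
      by_cases hp : p = p ⊔ q
      · right
        apply numBlocks_lt_of_lt le_sup_right
        intro hq
        exact hne (hp.trans hq.symm)
      · left
        exact numBlocks_lt_of_lt le_sup_left hp
    have h2 : numBlocks (p ⊔ q) ≤ numBlocks p := by
      by_cases hp : p = p ⊔ q
      · exact hp ▸ le_rfl
      · exact (numBlocks_lt_of_lt le_sup_left hp).le
    have h3 : numBlocks (p ⊔ q) ≤ numBlocks q := by
      by_cases hq : q = p ⊔ q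
      · exact hq ▸ le_rfl
      · exact (numBlocks_lt_of_lt le_sup_right hq).le
    have key : 2 * numBlocks (p ⊔ q) < numBlocks p + numBlocks q := by omega
    refine ⟨key, ?_⟩
    have hexp : (numBlocks (p ⊔ q) : ℝ) - ((numBlocks p : ℝ) + numBlocks q) / 2 < 0 := by
      have : (2 * numBlocks (p ⊔ q) : ℝ) < (numBlocks p : ℝ) + numBlocks q := by
        exact_mod_cast key
      linarith
    set c := (numBlocks (p ⊔ q) : ℝ) - ((numBlocks p : ℝ) + numBlocks q) / 2
    have := (tendsto_rpow_neg_atTop (by linarith : (0:ℝ) < -c)).comp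
      (tendsto_natCast_atTop_atTop (R := ℝ))
    simpa [Function.comp_def] using this
end

section
/- The R-transform R(z) = t z/(1 − z²) corresponds, via the equations G(K(z)) = z, K(z) = R(z) + 1/z, to a moment generating series f(z) = Σ_k m_k z^k satisfying f = 1 + (zf)²(f + t − 1), whose even moments are m_{2k} = Σ_{b=1}^k (1/b) binom(k−1, b−1) binom(2k, b−1) t^b and whose odd moments vanish. -/
open PowerSeries

/-- The moments of the free Bessel law, as polynomials in `t`:
`m_{2k} = Σ_{b=1}^k (1/b) binom(k−1,b−1) binom(2k,b−1) t^b`, `m_0 = 1`, odd moments `0`. -/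
noncomputable def freeBesselMoment : ℕ → Polynomial ℚ := fun k =>
  if k = 0 then 1
  else if 2 ∣ k then
    ∑ b ∈ Finset.Icc 1 (k / 2),
      Polynomial.C ((1 / (b : ℚ)) * ((k / 2 - 1).choose (b - 1)) * (k.choose (b - 1)))
        * Polynomial.X ^ b
  else 0

/-!
Put `f(z) = 1 + g(z²)`. The functional equation for `f` becomes `g = z ψ(g)` with
`ψ(u) = (1 + u)² (u + t)`, so the odd moments vanish, and Lagrange inversion gives
`k [z^k] g = [u^(k-1)] ψ(u)^k = Σ_b C(2k, b-1) C(k, b) t^b`, which is `k m_{2k}` because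
`C(k, b) / k = C(k-1, b-1) / b`.

The solution `g` is the `X`-adic limit of the iterates of `φ ↦ X ψ(φ)`. Lagrange inversion is
the residue identity `res ((XW)^n (XW)' / (XW)^(m+1)) = δ_{nm}` for an invertible `W`; since this
needs `ψ(0) = t` to be invertible, the moments are computed over `ℚ(t)` and pulled back along the
injective map `ℚ[t] → ℚ(t)`.
-/

theorem Polynomial.sub_dvd_aeval_sub {R A : Type*} [CommRing R] [CommRing A] [Algebra R A]
    (P : Polynomial R) (a b : A) : a - b ∣ Polynomial.aeval a P - Polynomial.aeval b P := by
  simpa only [Polynomial.eval_map_algebraMap] using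
    Polynomial.sub_dvd_eval_sub a b (P.map (algebraMap R A))

section LagrangeSeries

variable {R : Type*} [CommRing R]

noncomputable def lagrangeIterate (P : Polynomial R) (n : ℕ) : R⟦X⟧ :=
  (fun φ => X * Polynomial.aeval φ P)^[n] 0

noncomputable def lagrangeSeries (P : Polynomial R) : R⟦X⟧ :=
  mk fun n => coeff n (lagrangeIterate P n)

variable (P : Polynomial R)

theorem lagrangeIterate_succ (n : ℕ) :
    lagrangeIterate P (n + 1) = X * Polynomial.aeval (lagrangeIterate P n) P :=
  Function.iterate_succ_apply' _ _ _

theorem X_pow_dvd_lagrangeIterate_succ_sub (n : ℕ) :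
    X ^ (n + 1) ∣ lagrangeIterate P (n + 1) - lagrangeIterate P n := by
  induction n with
  | zero => simp [lagrangeIterate]
  | succ n ih =>
    rw [lagrangeIterate_succ P (n + 1), lagrangeIterate_succ P n, ← mul_sub,
      ← lagrangeIterate_succ, pow_succ']
    exact mul_dvd_mul_left X (ih.trans (Polynomial.sub_dvd_aeval_sub P _ _))

theorem X_pow_dvd_lagrangeIterate_sub {n m : ℕ} (h : n ≤ m) :
    X ^ (n + 1) ∣ lagrangeIterate P m - lagrangeIterate P n := by
  induction m, h using Nat.le_induction with
  | base => simp
  | succ m hnm ih =>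
    rw [← sub_add_sub_cancel]
    exact dvd_add ((pow_dvd_pow X (by omega)).trans (X_pow_dvd_lagrangeIterate_succ_sub P m)) ih

theorem X_pow_dvd_lagrangeSeries_sub (n : ℕ) :
    X ^ (n + 1) ∣ lagrangeSeries P - lagrangeIterate P n := by
  refine X_pow_dvd_iff.mpr fun m hm => ?_
  have h := X_pow_dvd_iff.mp (X_pow_dvd_lagrangeIterate_sub P (Nat.le_of_lt_succ hm)) m
    (Nat.lt_succ_self m)
  rw [map_sub, sub_eq_zero] at h ⊢
  rw [lagrangeSeries, coeff_mk, h]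

theorem lagrangeSeries_eq : lagrangeSeries P = X * Polynomial.aeval (lagrangeSeries P) P := by
  rw [← sub_eq_zero]
  ext n
  refine X_pow_dvd_iff.mp ?_ n (Nat.lt_succ_self n)
  have hsplit : lagrangeSeries P - X * Polynomial.aeval (lagrangeSeries P) P =
      (lagrangeSeries P - lagrangeIterate P (n + 1)) +
        X * (Polynomial.aeval (lagrangeIterate P n) P -
          Polynomial.aeval (lagrangeSeries P) P) := by
    rw [lagrangeIterate_succ]; ring
  rw [hsplit]
  refine dvd_add ((pow_dvd_pow X (by omega)).trans (X_pow_dvd_lagrangeSeries_sub P (n + 1))) ?_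
  exact Dvd.dvd.mul_left ((dvd_sub_comm.mp (X_pow_dvd_lagrangeSeries_sub P n)).trans
    (Polynomial.sub_dvd_aeval_sub P _ _)) X

theorem constantCoeff_lagrangeSeries : constantCoeff (lagrangeSeries P) = 0 := by
  rw [lagrangeSeries_eq]; simp

end LagrangeSeries

theorem PowerSeries.constantCoeff_aeval {R : Type*} [CommRing R] (φ : R⟦X⟧) (P : Polynomial R) :
    constantCoeff (Polynomial.aeval φ P) = P.eval (constantCoeff φ) := by
  rw [Polynomial.aeval_def, Polynomial.hom_eval₂]
  congr 1

section LagrangeInversion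

variable {K : Type*} [Field K] [CharZero K] {W : K⟦X⟧}

/-- For `j > 0` the series is `W⁻¹ ^ j - X * (W⁻¹ ^ j)' / j`, whose `X ^ j`-coefficient vanishes. -/
theorem coeff_inv_pow_succ_mul_derivative_X_mul (hW : constantCoeff W ≠ 0) (j : ℕ) :
    coeff j (W⁻¹ ^ (j + 1) * d⁄dX K (X * W)) = if j = 0 then 1 else 0 := by
  have hinv : W⁻¹ * W = 1 := PowerSeries.inv_mul_cancel W hW
  have hsplit : W⁻¹ ^ (j + 1) * d⁄dX K (X * W) = W⁻¹ ^ j + X * (W⁻¹ ^ (j + 1) * d⁄dX K W) := by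
    rw [Derivation.leibniz, derivative_X, smul_eq_mul, smul_eq_mul]
    linear_combination W⁻¹ ^ j * hinv
  rcases j with _ | i
  · rw [hsplit]; simp
  · have hderiv : d⁄dX K (W⁻¹ ^ (i + 1)) = C ((i : K) + 1) * -(W⁻¹ ^ (i + 2) * d⁄dX K W) := by
      rw [derivative_pow, derivative_inv', Nat.add_sub_cancel, map_add, map_one, map_natCast]
      push_cast; ring
    have hcoeff := congrArg (coeff i) hderiv
    rw [coeff_derivative, coeff_C_mul, map_neg] at hcoeff
    have hne : (i : K) + 1 ≠ 0 := Nat.cast_add_one_ne_zero i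
    rw [hsplit, map_add, coeff_succ_X_mul, if_neg (Nat.succ_ne_zero i)]
    exact (mul_eq_zero.mp (by linear_combination hcoeff)).resolve_left hne

theorem coeff_inv_pow_succ_mul_X_mul_pow_mul_derivative (hW : constantCoeff W ≠ 0) (m n : ℕ) :
    coeff m (W⁻¹ ^ (m + 1) * (X * W) ^ n * d⁄dX K (X * W)) = if n = m then 1 else 0 := by
  rcases le_or_gt n m with hnm | hmn
  · obtain ⟨j, rfl⟩ := Nat.exists_eq_add_of_le hnm
    have hinv : W⁻¹ * W = 1 := PowerSeries.inv_mul_cancel W hW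
    have hcancel : W⁻¹ ^ (n + j + 1) * (X * W) ^ n * d⁄dX K (X * W) =
        X ^ n * (W⁻¹ ^ (j + 1) * d⁄dX K (X * W)) := by
      calc _ = X ^ n * (W⁻¹ ^ (j + 1) * d⁄dX K (X * W)) * (W⁻¹ * W) ^ n := by ring
        _ = _ := by rw [hinv, one_pow, mul_one]
    rw [hcancel, coeff_X_pow_mul', if_pos hnm, Nat.add_sub_cancel_left,
      coeff_inv_pow_succ_mul_derivative_X_mul hW]
    simp
  · have hfactor : W⁻¹ ^ (m + 1) * (X * W) ^ n * d⁄dX K (X * W) =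
        X ^ n * (W⁻¹ ^ (m + 1) * W ^ n * d⁄dX K (X * W)) := by ring
    rw [hfactor, coeff_X_pow_mul', if_neg hmn.not_ge, if_neg hmn.ne']

theorem coeff_inv_pow_succ_mul_aeval_mul_derivative (hW : constantCoeff W ≠ 0)
    (Q : Polynomial K) (m : ℕ) :
    coeff m (W⁻¹ ^ (m + 1) * Polynomial.aeval (X * W) Q * d⁄dX K (X * W)) = Q.coeff m := by
  induction Q using Polynomial.induction_on' with
  | add p q hp hq => rw [map_add, mul_add, add_mul, map_add, hp, hq, Polynomial.coeff_add]
  | monomial n a =>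
    rw [Polynomial.aeval_monomial, PowerSeries.algebraMap_eq,
      show ∀ A B : K⟦X⟧, A * (C a * B) * (d⁄dX K (X * W)) = C a * (A * B * d⁄dX K (X * W))
        from fun _ _ => by ring,
      coeff_C_mul, coeff_inv_pow_succ_mul_X_mul_pow_mul_derivative hW, Polynomial.coeff_monomial]
    simp

theorem lagrange_inversion (P : Polynomial K) (hP : P.coeff 0 ≠ 0) {φ : K⟦X⟧}
    (hφ : φ = X * Polynomial.aeval φ P) (k : ℕ) :
    (k + 1) * coeff (k + 1) φ = (P ^ (k + 1)).coeff k := by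
  have hφ0 : constantCoeff φ = 0 := by rw [hφ]; simp
  have hW : constantCoeff (Polynomial.aeval φ P) ≠ 0 := by
    rwa [constantCoeff_aeval, hφ0, ← Polynomial.coeff_zero_eq_eval_zero]
  have h := coeff_inv_pow_succ_mul_aeval_mul_derivative hW (P ^ (k + 1)) k
  rw [← hφ, map_pow, ← mul_pow, PowerSeries.inv_mul_cancel _ hW, one_pow, one_mul,
    coeff_derivative] at h
  rw [← h, mul_comm]

end LagrangeInversion

theorem freeBesselMoment_zero : freeBesselMoment 0 = 1 := rfl

theorem freeBesselMoment_two_mul {k : ℕ} (hk : 1 ≤ k) :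
    freeBesselMoment (2 * k) = ∑ b ∈ Finset.Icc 1 k,
      Polynomial.C ((1 / (b : ℚ)) * ((k - 1).choose (b - 1)) * ((2 * k).choose (b - 1)))
        * Polynomial.X ^ b := by
  rw [freeBesselMoment, if_neg (by omega), if_pos (dvd_mul_right 2 k),
    Nat.mul_div_cancel_left k two_pos]

theorem freeBesselMoment_two_mul_add_one (k : ℕ) : freeBesselMoment (2 * k + 1) = 0 := by
  rw [freeBesselMoment, if_neg (by omega), if_neg (by omega)]

noncomputable def freeBesselLagrangePoly {R : Type*} [CommSemiring R] (t : R) : Polynomial R :=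
  (Polynomial.X + 1) ^ 2 * (Polynomial.X + Polynomial.C t)

theorem coeff_freeBesselLagrangePoly_pow_succ {R : Type*} [CommSemiring R] (t : R) (k : ℕ) :
    (freeBesselLagrangePoly t ^ (k + 1)).coeff k =
      ∑ b ∈ Finset.Icc 1 (k + 1),
        ((2 * (k + 1)).choose (b - 1) * (k + 1).choose b : R) * t ^ b := by
  rw [freeBesselLagrangePoly, mul_pow, ← pow_mul, ← Polynomial.C_1, Polynomial.coeff_mul]
  refine Finset.sum_nbij' (fun p => p.1 + 1) (fun b => (b - 1, k + 1 - b)) ?_ ?_ ?_ ?_ ?_ <;>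
    intro p hp <;>
    simp only [Finset.mem_Icc, Finset.HasAntidiagonal.mem_antidiagonal, Prod.ext_iff] at hp ⊢
  any_goals omega
  rw [Polynomial.coeff_X_add_C_pow, Polynomial.coeff_X_add_C_pow, one_pow, one_mul,
    show k + 1 - p.2 = p.1 + 1 by omega, Nat.add_sub_cancel,
    Nat.choose_symm_of_eq_add (show k + 1 = p.2 + (p.1 + 1) by omega)]
  ring

theorem aeval_freeBesselLagrangePoly {R : Type*} [CommRing R] (t : R) (φ : R⟦X⟧) :
    Polynomial.aeval φ (freeBesselLagrangePoly t) = (φ + 1) ^ 2 * (φ + C t) := by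
  simp [freeBesselLagrangePoly, PowerSeries.algebraMap_eq]

noncomputable def freeBesselSeries {R : Type*} [CommRing R] (t : R) : R⟦X⟧ :=
  1 + expand 2 two_ne_zero (lagrangeSeries (freeBesselLagrangePoly t))

theorem freeBesselSeries_eq {R : Type*} [CommRing R] (t : R) :
    freeBesselSeries t = 1 + (X * freeBesselSeries t) ^ 2 * (freeBesselSeries t + C t - 1) := by
  have hg := congrArg (expand 2 two_ne_zero) (lagrangeSeries_eq (freeBesselLagrangePoly t))
  rw [aeval_freeBesselLagrangePoly] at hg
  simp only [map_mul, map_pow, map_add, map_one, expand_X, expand_C] at hg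
  rw [freeBesselSeries]
  linear_combination hg

section FreeBessel

variable {K : Type*} [Field K] [CharZero K]

theorem coeff_lagrangeSeries_freeBesselLagrangePoly {t : K} (ht : t ≠ 0) (k : ℕ) :
    coeff (k + 1) (lagrangeSeries (freeBesselLagrangePoly t)) =
      Polynomial.aeval t (freeBesselMoment (2 * (k + 1))) := by
  have hP : (freeBesselLagrangePoly t).coeff 0 ≠ 0 := by
    simpa [freeBesselLagrangePoly, Polynomial.coeff_zero_eq_eval_zero] using ht
  have hL := lagrange_inversion _ hP (lagrangeSeries_eq _) k
  rw [coeff_freeBesselLagrangePoly_pow_succ] at hL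
  rw [← mul_right_inj' (Nat.cast_add_one_ne_zero k : (k : K) + 1 ≠ 0), hL,
    freeBesselMoment_two_mul (by omega), map_sum, Nat.add_sub_cancel, Finset.mul_sum]
  refine Finset.sum_congr rfl fun b hb => ?_
  obtain ⟨i, rfl⟩ := Nat.exists_eq_add_of_le' (Finset.mem_Icc.mp hb).1
  have hchoose : ((k + 1) * k.choose i : K) = (k + 1).choose (i + 1) * (i + 1) := by
    exact_mod_cast Nat.add_one_mul_choose_eq k i
  rw [map_mul, Polynomial.aeval_C, Polynomial.aeval_X_pow, ← mul_assoc, Nat.add_sub_cancel]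
  congr 1
  simp only [map_mul, map_div₀, map_one, map_natCast]
  push_cast
  field_simp
  linear_combination (-((2 * (k + 1)).choose i : K)) * hchoose

theorem coeff_freeBesselSeries {t : K} (ht : t ≠ 0) (n : ℕ) :
    coeff n (freeBesselSeries t) = Polynomial.aeval t (freeBesselMoment n) := by
  rw [freeBesselSeries, map_add, coeff_one]
  obtain ⟨k, rfl | rfl⟩ := Nat.even_or_odd' n
  · rcases k with _ | k
    · simp [freeBesselMoment_zero, constantCoeff_lagrangeSeries]
    · rw [coeff_expand_mul, coeff_lagrangeSeries_freeBesselLagrangePoly ht, if_neg (by omega),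
        zero_add]
  · rw [freeBesselMoment_two_mul_add_one, coeff_expand_of_not_dvd _ _ _ (by omega),
      if_neg (by omega)]
    simp

end FreeBessel

/-- The R-transform `R(z) = t z/(1 − z²)` corresponds, via `G(K(z)) = z`,
`K(z) = R(z) + 1/z` (equivalently, the relation `f(z) = 1 + w·R(w)` with `w = z f(z)`,
which for this `R` reads `(1 − w²)(f − 1) = t w²`), to the moment series
`f(z) = Σ_k m_k z^k` satisfying `f = 1 + (zf)²(f + t − 1)`, whose even moments are
`m_{2k} = Σ_{b=1}^k (1/b) binom(k−1,b−1) binom(2k,b−1) t^b` and whose odd moments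
vanish. All identities are between formal power series in `z` over `ℚ[t]`. -/
theorem freeBessel_R_transform :
    let f : PowerSeries (Polynomial ℚ) := PowerSeries.mk freeBesselMoment
    let T : PowerSeries (Polynomial ℚ) := PowerSeries.C Polynomial.X
    let w : PowerSeries (Polynomial ℚ) := PowerSeries.X * f
    (1 - w ^ 2) * (f - 1) = T * w ^ 2 ∧
    f = 1 + w ^ 2 * (f + T - 1) ∧
    (∀ k : ℕ, 1 ≤ k → PowerSeries.coeff (2 * k) f =
      ∑ b ∈ Finset.Icc 1 k,
        Polynomial.C ((1 / (b : ℚ)) * ((k - 1).choose (b - 1)) * ((2 * k).choose (b - 1)))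
          * Polynomial.X ^ b) ∧
    (∀ k : ℕ, PowerSeries.coeff (2 * k + 1) f = 0) := by
  intro f T w
  have hmap : map (algebraMap (Polynomial ℚ) (RatFunc ℚ)) f = freeBesselSeries RatFunc.X := by
    ext n
    rw [coeff_map, coeff_mk, coeff_freeBesselSeries RatFunc.X_ne_zero, ← RatFunc.algebraMap_X,
      Polynomial.aeval_algebraMap_apply, Polynomial.aeval_X_left_apply]
  have hf : f = 1 + w ^ 2 * (f + T - 1) := by
    apply map_injective _ (IsFractionRing.injective (Polynomial ℚ) (RatFunc ℚ))
    simp only [w, T, map_add, map_mul, map_pow, map_sub, map_one, map_X, map_C, hmap,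
      RatFunc.algebraMap_X]
    exact freeBesselSeries_eq _
  refine ⟨by linear_combination hf, hf, fun k hk => ?_, fun k => ?_⟩
  · rw [coeff_mk, freeBesselMoment_two_mul hk]
  · rw [coeff_mk, freeBesselMoment_two_mul_add_one]
end
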